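/- arXiv:2510.06147 — 5 statements merged into one kernel-verified Lean document; each statement's English description precedes it below -/
import Mathlib

section
/- Quantum Efron–Stein inequality: let n ≥ 1, let d : Fin n → ℕ with d i ≥ 1, let ρ_i be a d_i-dimensional quantum state for each i, and let ϱ be the product state on K = Π i, Fin (d i) with entries ϱ(a,b) = ∏_i ρ_i(a i, b i). Then for every Hermitian matrix X indexed by K, Var_ϱ[X] ≤ ∑_{i=1}^n Re(Tr[ϱ · (D_i X)²]). -/
open scoped BigOperators ComplexOrder

noncomputable section

/-- A `d`-dimensional quantum state: positive semidefinite with trace 1. -/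
def IsState {d : ℕ} (ρ : Matrix (Fin d) (Fin d) ℂ) : Prop :=
  ρ.PosSemidef ∧ ρ.trace = 1

/-- The product state `ρ₁ ⊗ ⋯ ⊗ ρ_n` on `K = Π i, Fin (dim i)`. -/
def prodState {n : ℕ} {dim : Fin n → ℕ}
    (ρ : ∀ i, Matrix (Fin (dim i)) (Fin (dim i)) ℂ) :
    Matrix (∀ j, Fin (dim j)) (∀ j, Fin (dim j)) ℂ :=
  fun a b => ∏ i, ρ i (a i) (b i)

/-- Marginalization of the `i`-th component: `E_i X = Tr_i[ρ_i X] ⊗ Id_i`. -/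
def Emap {n : ℕ} {dim : Fin n → ℕ}
    (ρ : ∀ i, Matrix (Fin (dim i)) (Fin (dim i)) ℂ) (i : Fin n)
    (X : Matrix (∀ j, Fin (dim j)) (∀ j, Fin (dim j)) ℂ) :
    Matrix (∀ j, Fin (dim j)) (∀ j, Fin (dim j)) ℂ :=
  fun a b =>
    if a i = b i then
      ∑ e, ∑ c, ρ i e c * X (Function.update a i c) (Function.update b i e)
    else 0

/-- `D_i X = X - E_i X`. -/
def Dmap {n : ℕ} {dim : Fin n → ℕ}
    (ρ : ∀ i, Matrix (Fin (dim i)) (Fin (dim i)) ℂ) (i : Fin n)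
    (X : Matrix (∀ j, Fin (dim j)) (∀ j, Fin (dim j)) ℂ) :
    Matrix (∀ j, Fin (dim j)) (∀ j, Fin (dim j)) ℂ :=
  X - Emap ρ i X

/-- Variance of the observable `X` in the state `ϱ`. -/
def qVar {K : Type*} [Fintype K] (ϱ X : Matrix K K ℂ) : ℝ :=
  ((ϱ * (X * X)).trace).re - (((ϱ * X).trace).re) ^ 2

/-!
For `⟨A, B⟩_ϱ = Tr[ϱ A† B]`, each `E_i` is an orthogonal projection: splitting off the `i`-th
factor, `ϱ = ρ_i ⊗ σ` and `E_i B = 1 ⊗ Tr_i[ρ_i B]`, which gives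
`Tr[ϱ A E_i B] = Tr[ϱ E_i A E_i B]` and hence `‖B‖² = ‖E_i B‖² + ‖D_i B‖²`. The `E_i` commute, so
along `W_k = E_{k-1} ⋯ E_0` the squared norm of `W_k X` drops at step `k` by
`‖D_k W_k X‖² = ‖W_k D_k X‖² ≤ ‖D_k X‖²`. It ends at `‖W_n X‖² = Tr[ϱ X]²`, since `W_n X` acts
trivially on every factor and is therefore the scalar `Tr[ϱ X]`.
-/

open Matrix Finset
open scoped Kronecker

section PartialTrace

variable {R α β : Type*} [CommSemiring R] [Fintype α] [Fintype β]

/-- `Tr_α[(ρ ⊗ 1) X]`. -/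
def partialTrace (ρ : Matrix α α R) (X : Matrix (α × β) (α × β) R) : Matrix β β R :=
  of fun q r => ∑ e, ∑ c, ρ e c * X (c, q) (e, r)

lemma trace_kronecker_mul (ρ : Matrix α α R) (σ : Matrix β β R) (X : Matrix (α × β) (α × β) R) :
    (ρ ⊗ₖ σ * X).trace = (σ * partialTrace ρ X).trace := by
  simp only [trace, Matrix.diag, mul_apply, kronecker_apply, partialTrace, of_apply,
    Fintype.sum_prod_type, mul_sum]
  simp_rw [sum_comm (s := (univ : Finset α)) (t := (univ : Finset β))]
  ring_nf

variable [DecidableEq α]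

lemma partialTrace_mul_one_kronecker (ρ : Matrix α α R) (X : Matrix (α × β) (α × β) R)
    (M : Matrix β β R) :
    partialTrace ρ (X * (1 ⊗ₖ M)) = partialTrace ρ X * M := by
  ext q r
  simp only [partialTrace, of_apply, mul_apply, kronecker_apply, one_apply, ite_mul, one_mul,
    zero_mul, mul_ite, mul_zero, Fintype.sum_prod_type, sum_ite_irrel, sum_const_zero, sum_ite_eq',
    mem_univ, if_true, mul_sum, sum_mul]
  simp_rw [sum_comm (s := (univ : Finset α)) (t := (univ : Finset β))]
  ring_nf

omit [Fintype β] in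
lemma partialTrace_one_kronecker (ρ : Matrix α α R) (M : Matrix β β R) :
    partialTrace ρ ((1 : Matrix α α R) ⊗ₖ M) = ρ.trace • M := by
  ext q r
  simp [partialTrace, one_apply, trace, sum_mul]

variable {ρ : Matrix α α R} (htr : ρ.trace = 1) (σ : Matrix β β R)
include htr

lemma trace_kronecker_mul_one_kronecker_partialTrace (X : Matrix (α × β) (α × β) R) :
    (ρ ⊗ₖ σ * (1 ⊗ₖ partialTrace ρ X)).trace = (ρ ⊗ₖ σ * X).trace := by
  rw [trace_kronecker_mul, trace_kronecker_mul, partialTrace_one_kronecker, htr, one_smul]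

lemma trace_kronecker_mul_mul_one_kronecker (A : Matrix (α × β) (α × β) R) (M : Matrix β β R) :
    (ρ ⊗ₖ σ * A * (1 ⊗ₖ M)).trace =
      (ρ ⊗ₖ σ * (1 ⊗ₖ partialTrace ρ A) * (1 ⊗ₖ M)).trace := by
  rw [Matrix.mul_assoc, Matrix.mul_assoc, trace_kronecker_mul, trace_kronecker_mul,
    partialTrace_mul_one_kronecker, partialTrace_mul_one_kronecker, partialTrace_one_kronecker,
    htr, one_smul]

end PartialTrace

lemma Matrix.trace_mul_eq_trace_submatrix_mul {R K L : Type*} [NonUnitalNonAssocSemiring R] [Fintype K]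
    [Fintype L] (M N : Matrix K K R) (e : L ≃ K) :
    (M * N).trace = (M.submatrix e e * N.submatrix e e).trace := by
  rw [submatrix_mul_equiv]
  exact (e.sum_comp (M * N).diag).symm

section SplitAt

variable {n : ℕ} {dim : Fin n → ℕ}

def splitAt (dim : Fin n → ℕ) (i : Fin n) :
    Fin (dim i) × (∀ j : {j // j ≠ i}, Fin (dim j)) ≃ ∀ j, Fin (dim j) :=
  (Equiv.piSplitAt i fun j => Fin (dim j)).symm

@[simp]
lemma splitAt_apply_self (i : Fin n) (p : Fin (dim i) × ∀ j : {j // j ≠ i}, Fin (dim j)) :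
    splitAt dim i p i = p.1 := by
  simp [splitAt]

@[simp]
lemma splitAt_apply_ne (i : Fin n) (p : Fin (dim i) × ∀ j : {j // j ≠ i}, Fin (dim j))
    (j : {j // j ≠ i}) : splitAt dim i p j = p.2 j := by
  simp [splitAt, j.2]

@[simp]
lemma update_splitAt (i : Fin n) (t c : Fin (dim i)) (a : ∀ j : {j // j ≠ i}, Fin (dim j)) :
    Function.update (splitAt dim i (t, a)) i c = splitAt dim i (c, a) := by
  funext j
  rcases eq_or_ne j i with rfl | hj
  · simp
  · rw [Function.update_of_ne hj]
    exact (splitAt_apply_ne i (t, a) ⟨j, hj⟩).trans (splitAt_apply_ne i (c, a) ⟨j, hj⟩).symm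

variable (ρ : ∀ i, Matrix (Fin (dim i)) (Fin (dim i)) ℂ)

lemma prodState_submatrix_splitAt (i : Fin n) :
    (prodState ρ).submatrix (splitAt dim i) (splitAt dim i) =
      ρ i ⊗ₖ of fun a b => ∏ j : {j // j ≠ i}, ρ j (a j) (b j) := by
  ext ⟨t, a⟩ ⟨s, b⟩
  simp [prodState, Fintype.prod_eq_mul_prod_subtype_ne _ i]

lemma Emap_submatrix_splitAt (i : Fin n) (X : Matrix (∀ j, Fin (dim j)) (∀ j, Fin (dim j)) ℂ) :
    (Emap ρ i X).submatrix (splitAt dim i) (splitAt dim i) =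
      1 ⊗ₖ partialTrace (ρ i) (X.submatrix (splitAt dim i) (splitAt dim i)) := by
  ext ⟨t, a⟩ ⟨s, b⟩
  simp [Emap, partialTrace, one_apply]

variable {ρ} {i : Fin n} (htr : (ρ i).trace = 1)
include htr

lemma trace_prodState_mul_Emap (B : Matrix (∀ j, Fin (dim j)) (∀ j, Fin (dim j)) ℂ) :
    (prodState ρ * Emap ρ i B).trace = (prodState ρ * B).trace := by
  rw [trace_mul_eq_trace_submatrix_mul _ _ (splitAt dim i),
    trace_mul_eq_trace_submatrix_mul _ B (splitAt dim i), prodState_submatrix_splitAt,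
    Emap_submatrix_splitAt, trace_kronecker_mul_one_kronecker_partialTrace htr]

lemma trace_prodState_mul_mul_Emap (A B : Matrix (∀ j, Fin (dim j)) (∀ j, Fin (dim j)) ℂ) :
    (prodState ρ * A * Emap ρ i B).trace = (prodState ρ * Emap ρ i A * Emap ρ i B).trace := by
  rw [trace_mul_eq_trace_submatrix_mul _ _ (splitAt dim i),
    trace_mul_eq_trace_submatrix_mul _ (Emap ρ i B) (splitAt dim i),
    ← submatrix_mul_equiv _ _ _ (splitAt dim i), ← submatrix_mul_equiv _ _ _ (splitAt dim i),
    prodState_submatrix_splitAt, Emap_submatrix_splitAt, Emap_submatrix_splitAt,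
    trace_kronecker_mul_mul_one_kronecker htr]

end SplitAt

section Emap

variable {n : ℕ} {dim : Fin n → ℕ} (ρ : ∀ i, Matrix (Fin (dim i)) (Fin (dim i)) ℂ)

lemma Emap_sub (i : Fin n) (X Y : Matrix (∀ j, Fin (dim j)) (∀ j, Fin (dim j)) ℂ) :
    Emap ρ i (X - Y) = Emap ρ i X - Emap ρ i Y := by
  ext a b
  by_cases h : a i = b i <;> simp [Emap, h, mul_sub]

lemma Emap_Emap {i : Fin n} (htr : (ρ i).trace = 1)
    (X : Matrix (∀ j, Fin (dim j)) (∀ j, Fin (dim j)) ℂ) :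
    Emap ρ i (Emap ρ i X) = Emap ρ i X := by
  ext a b
  by_cases h : a i = b i
  · simp only [Emap, h, Function.update_idem, Function.update_self, if_true, mul_ite, mul_zero,
      sum_ite_eq', mem_univ, ← sum_mul]
    rw [show ∑ e, ρ i e e = (ρ i).trace from rfl, htr, one_mul]
  · simp [Emap, h]

lemma Emap_Dmap {i : Fin n} (htr : (ρ i).trace = 1)
    (X : Matrix (∀ j, Fin (dim j)) (∀ j, Fin (dim j)) ℂ) :
    Emap ρ i (Dmap ρ i X) = 0 := by
  rw [Dmap, Emap_sub, Emap_Emap ρ htr, sub_self]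

lemma conjTranspose_Emap {i : Fin n} (hH : (ρ i).IsHermitian)
    (X : Matrix (∀ j, Fin (dim j)) (∀ j, Fin (dim j)) ℂ) :
    (Emap ρ i X)ᴴ = Emap ρ i Xᴴ := by
  ext a b
  by_cases h : a i = b i
  · simp only [conjTranspose_apply, Emap, h, if_true, star_sum, star_mul', hH.apply]
    exact sum_comm
  · simp [Emap, h, Ne.symm h]

lemma isHermitian_Dmap {i : Fin n} (hH : (ρ i).IsHermitian)
    {X : Matrix (∀ j, Fin (dim j)) (∀ j, Fin (dim j)) ℂ} (hX : X.IsHermitian) :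
    (Dmap ρ i X).IsHermitian := by
  rw [IsHermitian, Dmap, conjTranspose_sub, conjTranspose_Emap ρ hH, hX.eq]

lemma Emap_comm {i j : Fin n} (hij : i ≠ j)
    (X : Matrix (∀ j, Fin (dim j)) (∀ j, Fin (dim j)) ℂ) :
    Emap ρ i (Emap ρ j X) = Emap ρ j (Emap ρ i X) := by
  ext a b
  by_cases hi : a i = b i <;> by_cases hj : a j = b j <;>
    simp only [Emap, Function.update_of_ne hij, Function.update_of_ne hij.symm, hi, hj, if_true,
      if_false, mul_zero, sum_const_zero, mul_sum]
  simp_rw [sum_comm (s := (univ : Finset (Fin (dim i)))) (t := (univ : Finset (Fin (dim j)))),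
    Function.update_comm hij, mul_left_comm (ρ i _ _)]

end Emap

section StateNormSq

variable {K : Type*} [Fintype K] {ϱ : Matrix K K ℂ}

def stateNormSq (ϱ A : Matrix K K ℂ) : ℝ :=
  ((ϱ * (Aᴴ * A)).trace).re

lemma stateNormSq_nonneg (hϱ : ϱ.PosSemidef) (A : Matrix K K ℂ) : 0 ≤ stateNormSq ϱ A := by
  have h : (ϱ * (Aᴴ * A)).trace = (A * ϱ * Aᴴ).trace := by
    rw [← Matrix.mul_assoc, trace_mul_cycle]
  rw [stateNormSq, h]
  exact (Complex.nonneg_iff.mp (hϱ.mul_mul_conjTranspose_same A).trace_nonneg).1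

lemma stateNormSq_of_isHermitian {A : Matrix K K ℂ} (hA : A.IsHermitian) :
    stateNormSq ϱ A = ((ϱ * (A * A)).trace).re := by
  rw [stateNormSq, hA.eq]

lemma qVar_eq_stateNormSq_sub {X : Matrix K K ℂ} (hX : X.IsHermitian) :
    qVar ϱ X = stateNormSq ϱ X - ((ϱ * X).trace.re) ^ 2 := by
  rw [qVar, stateNormSq_of_isHermitian hX]

lemma star_trace_mul_conjTranspose_mul (hϱ : ϱ.IsHermitian) (A B : Matrix K K ℂ) :
    star (ϱ * (Aᴴ * B)).trace = (ϱ * (Bᴴ * A)).trace := by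
  rw [← trace_conjTranspose, conjTranspose_mul, conjTranspose_mul, conjTranspose_conjTranspose,
    hϱ.eq, trace_mul_comm]

lemma trace_mul_eq_ofReal_re (hϱ : ϱ.IsHermitian) {X : Matrix K K ℂ} (hX : X.IsHermitian) :
    (ϱ * X).trace = ((ϱ * X).trace.re : ℂ) := by
  refine (Complex.conj_eq_iff_re.mp ?_).symm
  rw [← Complex.star_def, ← trace_conjTranspose, conjTranspose_mul, hϱ.eq, hX.eq, trace_mul_comm]

lemma stateNormSq_add (hϱ : ϱ.IsHermitian) {A B : Matrix K K ℂ}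
    (h : (ϱ * (Bᴴ * A)).trace = 0) :
    stateNormSq ϱ (A + B) = stateNormSq ϱ A + stateNormSq ϱ B := by
  have h' : (ϱ * (Aᴴ * B)).trace = 0 := by
    rw [← star_trace_mul_conjTranspose_mul hϱ, h, star_zero]
  simp only [stateNormSq, conjTranspose_add, add_mul, mul_add, trace_add, Complex.add_re, h, h',
    Complex.zero_re]
  ring

lemma stateNormSq_smul_one [DecidableEq K] (htr : ϱ.trace = 1) (γ : ℂ) :
    stateNormSq ϱ (γ • 1) = Complex.normSq γ := by
  simp [stateNormSq, htr, Complex.normSq_apply]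

end StateNormSq

lemma Matrix.PosSemidef.prod_hadamard {𝕜 ι K : Type*} [RCLike 𝕜] [Finite K] (s : Finset ι)
    {A : ι → Matrix K K 𝕜} (hA : ∀ i ∈ s, (A i).PosSemidef) :
    (of fun a b => ∏ i ∈ s, A i a b).PosSemidef := by
  classical
  induction s using Finset.induction_on with
  | empty => simpa [vecMulVec] using posSemidef_vecMulVec_self_star fun _ : K => (1 : 𝕜)
  | insert i s hi ih =>
    convert (hA i (mem_insert_self i s)).hadamard (ih fun j hj => hA j (mem_insert_of_mem hj))
      using 1
    ext a b
    simp [prod_insert hi]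

section ProductState

variable {n : ℕ} {dim : Fin n → ℕ} {ρ : ∀ i, Matrix (Fin (dim i)) (Fin (dim i)) ℂ}

lemma posSemidef_prodState (h : ∀ i, (ρ i).PosSemidef) : (prodState ρ).PosSemidef :=
  PosSemidef.prod_hadamard univ fun i _ => (h i).submatrix fun a : ∀ j, Fin (dim j) => a i

lemma trace_prodState (htr : ∀ i, (ρ i).trace = 1) : (prodState ρ).trace = 1 := by
  simp only [trace, Matrix.diag, prodState]
  rw [← Fintype.prod_sum fun i (t : Fin (dim i)) => ρ i t t]
  exact prod_eq_one fun i _ => htr i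

lemma trace_prodState_mul_conjTranspose_Dmap_mul_Emap {i : Fin n} (hH : (ρ i).IsHermitian)
    (htr : (ρ i).trace = 1) (B : Matrix (∀ j, Fin (dim j)) (∀ j, Fin (dim j)) ℂ) :
    (prodState ρ * ((Dmap ρ i B)ᴴ * Emap ρ i B)).trace = 0 := by
  rw [← Matrix.mul_assoc, trace_prodState_mul_mul_Emap htr, ← conjTranspose_Emap ρ hH,
    Emap_Dmap ρ htr, conjTranspose_zero, Matrix.mul_zero, Matrix.zero_mul, trace_zero]

lemma stateNormSq_eq_Emap_add_Dmap (hρ : ∀ j, (ρ j).PosSemidef) {i : Fin n}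
    (htr : (ρ i).trace = 1) (B : Matrix (∀ j, Fin (dim j)) (∀ j, Fin (dim j)) ℂ) :
    stateNormSq (prodState ρ) B =
      stateNormSq (prodState ρ) (Emap ρ i B) + stateNormSq (prodState ρ) (Dmap ρ i B) := by
  conv_lhs => rw [← add_sub_cancel (Emap ρ i B) B, ← Dmap]
  exact stateNormSq_add (posSemidef_prodState hρ).isHermitian
    (trace_prodState_mul_conjTranspose_Dmap_mul_Emap (hρ i).isHermitian htr B)

lemma stateNormSq_Emap_le (hρ : ∀ j, (ρ j).PosSemidef) {i : Fin n} (htr : (ρ i).trace = 1)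
    (B : Matrix (∀ j, Fin (dim j)) (∀ j, Fin (dim j)) ℂ) :
    stateNormSq (prodState ρ) (Emap ρ i B) ≤ stateNormSq (prodState ρ) B := by
  rw [stateNormSq_eq_Emap_add_Dmap hρ htr B]
  linarith [stateNormSq_nonneg (posSemidef_prodState hρ) (Dmap ρ i B)]

end ProductState

lemma apply_eq_of_forall_apply_update_eq {ι M : Type*} [DecidableEq ι] [Fintype ι] {κ : ι → Type*}
    {f : (∀ i, κ i) → M}
    (hf : ∀ a i c, f (Function.update a i c) = f a) (a b : ∀ i, κ i) : f a = f b := by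
  suffices h : ∀ s : Finset ι, f (s.piecewise b a) = f a by
    simpa using (h univ).symm
  intro s
  induction s using Finset.induction_on with
  | empty => simp
  | insert i s _ ih => rw [piecewise_insert, hf, ih]

section ActsTrivially

variable {ι R : Type*} [DecidableEq ι] {κ : ι → Type*} [∀ i, DecidableEq (κ i)]

/-- `Y = 1 ⊗ Y'` with the identity on the `i`-th factor. -/
def ActsTriviallyAt [Zero R] (i : ι) (Y : Matrix (∀ j, κ j) (∀ j, κ j) R) : Prop :=
  ∀ a b c, Y a b = if a i = b i then Y (Function.update a i c) (Function.update b i c) else 0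

lemma exists_eq_smul_one_of_forall_actsTriviallyAt [Fintype ι]
    [Semiring R] {Y : Matrix (∀ j, κ j) (∀ j, κ j) R} (hY : ∀ i, ActsTriviallyAt i Y) :
    ∃ γ : R, Y = γ • 1 := by
  rcases isEmpty_or_nonempty (∀ j, κ j) with hK | ⟨⟨z⟩⟩
  · exact ⟨0, Subsingleton.elim _ _⟩
  refine ⟨Y z z, ?_⟩
  ext a b
  by_cases hab : a = b
  · subst hab
    simp only [Matrix.smul_apply, one_apply_eq, smul_eq_mul, mul_one]
    refine apply_eq_of_forall_apply_update_eq (f := fun a => Y a a) (fun a i c => ?_) a z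
    simpa using (hY i a a c).symm
  · obtain ⟨i, hi⟩ := Function.ne_iff.mp hab
    simp [hY i a b (a i), hi, hab]

variable {n : ℕ} {dim : Fin n → ℕ} (ρ : ∀ i, Matrix (Fin (dim i)) (Fin (dim i)) ℂ)

lemma actsTriviallyAt_Emap (i : Fin n) (X : Matrix (∀ j, Fin (dim j)) (∀ j, Fin (dim j)) ℂ) :
    ActsTriviallyAt i (Emap ρ i X) := by
  intro a b c
  by_cases h : a i = b i <;> simp [Emap, h]

lemma ActsTriviallyAt.Emap {i j : Fin n} {Y : Matrix (∀ j, Fin (dim j)) (∀ j, Fin (dim j)) ℂ}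
    (hY : ActsTriviallyAt i Y) (hji : j ≠ i) : ActsTriviallyAt i (Emap ρ j Y) := by
  intro a b c
  have hupd : ∀ e d, Y (Function.update a j d) (Function.update b j e) =
      if a i = b i then
        Y (Function.update (Function.update a i c) j d) (Function.update (Function.update b i c) j e)
      else 0 := by
    intro e d
    rw [hY _ _ c, Function.update_of_ne hji.symm, Function.update_of_ne hji.symm,
      Function.update_comm hji, Function.update_comm hji]
  by_cases hi : a i = b i <;> by_cases hj : a j = b j <;>
    simp [_root_.Emap, hupd, hi, hj, Function.update_of_ne hji]

end ActsTrivially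

section IteratedEmap

variable {n : ℕ} {dim : Fin n → ℕ} {ρ : ∀ i, Matrix (Fin (dim i)) (Fin (dim i)) ℂ}

lemma trace_prodState_mul_foldr_Emap (htr : ∀ i, (ρ i).trace = 1) (l : List (Fin n))
    (X : Matrix (∀ j, Fin (dim j)) (∀ j, Fin (dim j)) ℂ) :
    (prodState ρ * l.foldr (Emap ρ) X).trace = (prodState ρ * X).trace := by
  induction l with
  | nil => rfl
  | cons i l ih => rw [List.foldr_cons, trace_prodState_mul_Emap (htr i), ih]

lemma foldr_Emap_Dmap {i : Fin n} {l : List (Fin n)} (hi : i ∉ l)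
    (X : Matrix (∀ j, Fin (dim j)) (∀ j, Fin (dim j)) ℂ) :
    l.foldr (Emap ρ) (Dmap ρ i X) = Dmap ρ i (l.foldr (Emap ρ) X) := by
  induction l with
  | nil => rfl
  | cons j l ih =>
    rw [List.foldr_cons, List.foldr_cons, ih (List.not_mem_of_not_mem_cons hi), Dmap, Dmap,
      Emap_sub, Emap_comm ρ (Ne.symm (List.ne_of_not_mem_cons hi))]

lemma stateNormSq_foldr_Emap_le (hρ : ∀ i, IsState (ρ i)) (l : List (Fin n))
    (X : Matrix (∀ j, Fin (dim j)) (∀ j, Fin (dim j)) ℂ) :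
    stateNormSq (prodState ρ) (l.foldr (Emap ρ) X) ≤ stateNormSq (prodState ρ) X := by
  induction l with
  | nil => rfl
  | cons i l ih =>
    exact (stateNormSq_Emap_le (fun j => (hρ j).1) (hρ i).2 _).trans ih

lemma stateNormSq_le_foldr_Emap_add_sum (hρ : ∀ i, IsState (ρ i)) {l : List (Fin n)}
    (hl : l.Nodup) (X : Matrix (∀ j, Fin (dim j)) (∀ j, Fin (dim j)) ℂ) :
    stateNormSq (prodState ρ) X ≤ stateNormSq (prodState ρ) (l.foldr (Emap ρ) X) +
      (l.map fun i => stateNormSq (prodState ρ) (Dmap ρ i X)).sum := by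
  induction l with
  | nil => simp
  | cons i l ih =>
    obtain ⟨hi, hl⟩ := List.nodup_cons.mp hl
    have hsplit := stateNormSq_eq_Emap_add_Dmap (fun j => (hρ j).1) (hρ i).2 (l.foldr (Emap ρ) X)
    have hDmap := stateNormSq_foldr_Emap_le hρ l (Dmap ρ i X)
    rw [foldr_Emap_Dmap hi] at hDmap
    rw [List.foldr_cons, List.map_cons, List.sum_cons]
    linarith [ih hl]

lemma actsTriviallyAt_foldr_Emap {i : Fin n} {l : List (Fin n)} (hi : i ∈ l)
    (X : Matrix (∀ j, Fin (dim j)) (∀ j, Fin (dim j)) ℂ) :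
    ActsTriviallyAt i (l.foldr (Emap ρ) X) := by
  induction l with
  | nil => cases hi
  | cons j l ih =>
    rw [List.foldr_cons]
    rcases eq_or_ne j i with rfl | hji
    · exact actsTriviallyAt_Emap ρ j _
    · exact (ih ((List.mem_cons.mp hi).resolve_left hji.symm)).Emap ρ hji

lemma stateNormSq_foldr_finRange_Emap (hρ : ∀ i, IsState (ρ i))
    {X : Matrix (∀ j, Fin (dim j)) (∀ j, Fin (dim j)) ℂ} (hX : X.IsHermitian) :
    stateNormSq (prodState ρ) ((List.finRange n).foldr (Emap ρ) X) =
      ((prodState ρ * X).trace.re) ^ 2 := by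
  have htr : (prodState ρ).trace = 1 := trace_prodState fun i => (hρ i).2
  obtain ⟨γ, hγ⟩ := exists_eq_smul_one_of_forall_actsTriviallyAt fun i =>
    actsTriviallyAt_foldr_Emap (List.mem_finRange i) X
  have hmean : γ = (prodState ρ * X).trace := by
    rw [← trace_prodState_mul_foldr_Emap (fun i => (hρ i).2) (List.finRange n), hγ,
      Matrix.mul_smul, Matrix.mul_one, trace_smul, htr, smul_eq_mul, mul_one]
  rw [hγ, stateNormSq_smul_one htr, hmean,
    trace_mul_eq_ofReal_re (posSemidef_prodState fun i => (hρ i).1).isHermitian hX,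
    Complex.normSq_ofReal, Complex.ofReal_re, sq]

end IteratedEmap

theorem quantum_efron_stein_general (n : ℕ) (dim : Fin n → ℕ)
    (ρ : ∀ i, Matrix (Fin (dim i)) (Fin (dim i)) ℂ)
    (hρ : ∀ i, IsState (ρ i))
    (X : Matrix (∀ j, Fin (dim j)) (∀ j, Fin (dim j)) ℂ) (hX : X.IsHermitian) :
    qVar (prodState ρ) X ≤
      ∑ i, ((prodState ρ * (Dmap ρ i X * Dmap ρ i X)).trace).re := by
  have hES := stateNormSq_le_foldr_Emap_add_sum hρ (List.nodup_finRange n) X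
  rw [stateNormSq_foldr_finRange_Emap hρ hX, ← Fin.sum_univ_def] at hES
  simp only [stateNormSq_of_isHermitian (isHermitian_Dmap ρ (hρ _).1.isHermitian hX)] at hES
  rw [qVar_eq_stateNormSq_sub hX]
  linarith

/-- Quantum Efron–Stein inequality. -/
theorem quantum_efron_stein (n : ℕ) (hn : 1 ≤ n) (dim : Fin n → ℕ)
    (hdim : ∀ i, 1 ≤ dim i)
    (ρ : ∀ i, Matrix (Fin (dim i)) (Fin (dim i)) ℂ)
    (hρ : ∀ i, IsState (ρ i))
    (X : Matrix (∀ j, Fin (dim j)) (∀ j, Fin (dim j)) ℂ) (hX : X.IsHermitian) :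
    qVar (prodState ρ) X ≤
      ∑ i, ((prodState ρ * (Dmap ρ i X * Dmap ρ i X)).trace).re :=
  quantum_efron_stein_general n dim ρ hρ X hX
end
end

section
/- Let n ≥ 1, let ρ_i be a d_i-dimensional quantum state for each i ∈ Fin n, and let ϱ be the product state on K = Π i, Fin (d i) with entries ϱ(a,b) = ∏_i ρ_i(a i, b i). Then for every Hermitian matrix X indexed by K and every i ∈ Fin n: Tr[ϱ·(D_i X)²] = Tr[(ϱ⊗ϱ)·(1/2)·(X⊗Id − F_i (X⊗Id) F_i)²] = Tr[ϱ·X²] − Tr[(ϱ⊗ϱ)·(X⊗Id)·F_i·(X⊗Id)·F_i], where ϱ⊗ϱ and X⊗Id are matrices on K × K with (ϱ⊗ϱ)((a,a'),(b,b')) = ϱ(a,b)·ϱ(a',b') and (X⊗Id)((a,a'),(b,b')) = X(a,b) if a' = b' and 0 otherwise. -/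
open scoped BigOperators ComplexOrder

noncomputable section

/-- `ϱ ⊗ ϱ` on the doubled space `K × K`. -/
def tensorSq {K : Type*} (ϱ : Matrix K K ℂ) : Matrix (K × K) (K × K) ℂ :=
  fun x y => ϱ x.1 y.1 * ϱ x.2 y.2

/-- `X ⊗ Id` on the doubled space `K × K`. -/
def tensId {K : Type*} [DecidableEq K] (X : Matrix K K ℂ) : Matrix (K × K) (K × K) ℂ :=
  fun x y => if x.2 = y.2 then X x.1 y.1 else 0

/-- The swap `F_i` of the `i`-th component of the first half with the
`i`-th component of the second half. -/
def Fswap {n : ℕ} {dim : Fin n → ℕ} (i : Fin n) :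
    Matrix ((∀ j, Fin (dim j)) × (∀ j, Fin (dim j)))
           ((∀ j, Fin (dim j)) × (∀ j, Fin (dim j))) ℂ :=
  fun x y =>
    if y.1 = Function.update x.1 i (x.2 i) ∧ y.2 = Function.update x.2 i (x.1 i)
    then 1 else 0

/-!
The map `E_i` is dual to a partial swap on the doubled space: for every `B`,
`Tr[B · E_i Y] = Tr[(B ⊗ ϱ) F_i (Y ⊗ 1) F_i]`, since after the swap the factors `ρ_j`, `j ≠ i`,
of the second copy trace out to one and its `i`-th factor `ρ_i` is what `E_i` integrates against.
With `B = ϱ X` this identifies the cross term `Tr[ϱ X E_i X]` with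
`Tr[(ϱ ⊗ ϱ)(X ⊗ 1) F_i (X ⊗ 1) F_i]`; with `B = ϱ E_i X`, where `E_i X ⊗ 1` commutes with `F_i`,
it gives `Tr[ϱ (E_i X)²] = Tr[ϱ (E_i X) X]`. Expanding `(X - E_i X)²` yields the second formula.
The first follows because `F_i` is an involution commuting with `ϱ ⊗ ϱ`, so conjugation by `F_i`
leaves `Tr[(ϱ ⊗ ϱ) ·]` unchanged.
-/

open Function Matrix Finset
open scoped Kronecker

namespace QuantumLocalVariance

section UpdateAt

variable {ι : Type*} [DecidableEq ι] {β : ι → Type*}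

def swapAt (i : ι) (x : (∀ j, β j) × (∀ j, β j)) : (∀ j, β j) × (∀ j, β j) :=
  (update x.1 i (x.2 i), update x.2 i (x.1 i))

theorem swapAt_involutive (i : ι) : Involutive (swapAt (β := β) i) := fun x => by
  simp [swapAt]

theorem update_eq_update_and_eq_iff {i : ι} {f g : ∀ j, β j} {s t : β i} :
    (update f i s = update g i t ∧ f i = g i) ↔ (f = g ∧ s = t) := by
  constructor
  · rintro ⟨h, hi⟩
    refine ⟨funext fun j => ?_, by simpa using congr_fun h i⟩
    rcases eq_or_ne j i with rfl | hj
    · exact hi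
    · simpa [hj] using congr_fun h j
  · rintro ⟨rfl, rfl⟩
    exact ⟨rfl, rfl⟩

theorem sum_sum_comp_update [Fintype ι] [∀ j, Fintype (β j)] {M : Type*} [AddCommMonoid M]
    (i : ι) (H : (∀ j, β j) → β i → M) :
    ∑ c, ∑ f, H (update c i f) (c i) = ∑ c, ∑ f, H c f := by
  have h : Involutive fun p : (∀ j, β j) × β i => (update p.1 i p.2, p.1 i) := fun p => by simp
  simp only [← Fintype.sum_prod_type']
  exact Equiv.sum_comp (h.toPerm _) fun p => H p.1 p.2

end UpdateAt

section DoubledSpace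

variable {m R : Type*} [Fintype m] [DecidableEq m] [CommRing R] {F P : Matrix m m R}

theorem trace_mul_conj_of_commute (hF : F * F = 1) (hP : Commute F P) (Q : Matrix m m R) :
    trace (P * (F * Q * F)) = trace (P * Q) := by
  rw [← mul_assoc, ← mul_assoc, trace_mul_comm, ← mul_assoc, ← mul_assoc, hP.eq, mul_assoc P,
    hF, mul_one]

theorem trace_mul_sq_sub_conj (hF : F * F = 1) (hP : Commute F P) (T : Matrix m m R) :
    trace (P * ((T - F * T * F) * (T - F * T * F))) =
      2 * (trace (P * (T * T)) - trace (P * (T * F * T * F))) := by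
  have hGG : F * T * F * (F * T * F) = F * (T * T) * F := by
    rw [show F * T * F * (F * T * F) = F * T * (F * F) * T * F by noncomm_ring, hF]
    noncomm_ring
  have hGT : F * T * F * T = F * (T * F * T * F) * F := by
    rw [show F * (T * F * T * F) * F = F * T * F * T * (F * F) by noncomm_ring, hF, mul_one]
  have hexp : (T - F * T * F) * (T - F * T * F) =
      T * T - T * F * T * F - F * T * F * T + F * T * F * (F * T * F) := by noncomm_ring
  rw [hexp, hGG, hGT]
  simp only [mul_add, mul_sub, trace_add, trace_sub, trace_mul_conj_of_commute hF hP]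
  ring

end DoubledSpace

section Kronecker

variable {K : Type*} [DecidableEq K]

theorem tensId_eq_kronecker (X : Matrix K K ℂ) : tensId X = X ⊗ₖ 1 := by
  ext x y
  simp [tensId, one_apply]

theorem tensorSq_mul_tensId [Fintype K] (ϱ A : Matrix K K ℂ) :
    tensorSq ϱ * tensId A = (ϱ * A) ⊗ₖ ϱ := by
  rw [tensId_eq_kronecker, show tensorSq ϱ = ϱ ⊗ₖ ϱ from rfl, ← mul_kronecker_mul, mul_one]

theorem tensId_mul_tensId [Fintype K] (A B : Matrix K K ℂ) :
    tensId A * tensId B = tensId (A * B) := by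
  rw [tensId_eq_kronecker, tensId_eq_kronecker, tensId_eq_kronecker, ← mul_kronecker_mul, mul_one]

end Kronecker

section ProductState

variable {n : ℕ} {dim : Fin n → ℕ}

theorem Fswap_eq_permMatrix (i : Fin n) :
    (Fswap i : Matrix ((∀ j, Fin (dim j)) × (∀ j, Fin (dim j))) _ ℂ) =
      (swapAt_involutive i).toPerm.permMatrix ℂ := by
  ext x y
  simp [Fswap, swapAt, Prod.ext_iff, eq_comm]

theorem Fswap_mul_Fswap (i : Fin n) :
    (Fswap i * Fswap i : Matrix ((∀ j, Fin (dim j)) × (∀ j, Fin (dim j))) _ ℂ) = 1 := by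
  have hσ : (swapAt_involutive i).toPerm * (swapAt_involutive i).toPerm = 1 :=
    Equiv.ext (swapAt_involutive (β := fun j => Fin (dim j)) i)
  rw [Fswap_eq_permMatrix, ← permMatrix_mul, hσ, permMatrix_one]

theorem Fswap_mul_mul_Fswap (i : Fin n) (M : Matrix ((∀ j, Fin (dim j)) × (∀ j, Fin (dim j))) _ ℂ) :
    Fswap i * M * Fswap i = M.submatrix (swapAt i) (swapAt i) := by
  rw [Fswap_eq_permMatrix, Equiv.Perm.permMatrix, PEquiv.toMatrix_toPEquiv_mul,
    PEquiv.mul_toMatrix_toPEquiv, submatrix_submatrix, Involutive.toPerm_symm]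
  rfl

theorem commute_Fswap_of_invariant {i : Fin n}
    {M : Matrix ((∀ j, Fin (dim j)) × (∀ j, Fin (dim j))) _ ℂ}
    (hM : ∀ x y, M (swapAt i x) (swapAt i y) = M x y) : Commute (Fswap i) M := by
  have hconj : Fswap i * M * Fswap i = M := by
    rw [Fswap_mul_mul_Fswap]
    exact Matrix.ext hM
  calc Fswap i * M = Fswap i * (Fswap i * M * Fswap i) := by rw [hconj]
    _ = M * Fswap i := by rw [← mul_assoc, ← mul_assoc, Fswap_mul_Fswap, one_mul]

variable (ρ : ∀ i, Matrix (Fin (dim i)) (Fin (dim i)) ℂ)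

theorem trace_prodState (hρ : ∀ j, (ρ j).trace = 1) : (prodState ρ).trace = 1 :=
  (Fintype.prod_sum fun j (x : Fin (dim j)) => ρ j x x).symm.trans
    (prod_eq_one fun j _ => hρ j)

theorem sum_prodState_update_mul (hρ : ∀ j, (ρ j).trace = 1) (i : Fin n) (c : Fin (dim i))
    (g : Fin (dim i) → ℂ) :
    ∑ a, prodState ρ a (update a i c) * g (a i) = ∑ e, ρ i e c * g e := by
  set h := update (fun j (x : Fin (dim j)) => ρ j x x) i (fun x => ρ i x c * g x)
  have hj : ∀ j ∈ univ.erase i, h j = fun x => ρ j x x := fun j hj =>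
    update_of_ne (ne_of_mem_erase hj) _ _
  have hprod : ∀ a : ∀ j, Fin (dim j), prodState ρ a (update a i c) * g (a i) = ∏ j, h j (a j) := by
    intro a
    rw [prodState, ← mul_prod_erase univ _ (mem_univ i),
      ← mul_prod_erase univ (fun j => h j (a j)) (mem_univ i)]
    have hrest : ∏ j ∈ univ.erase i, ρ j (a j) (update a i c j) =
        ∏ j ∈ univ.erase i, h j (a j) :=
      prod_congr rfl fun j hj' => by rw [hj j hj', update_of_ne (ne_of_mem_erase hj')]
    simp only [hrest, h, update_self]
    ring
  rw [Fintype.sum_congr _ _ hprod, ← Fintype.prod_sum, ← mul_prod_erase univ _ (mem_univ i),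
    prod_eq_one fun j hj' => by rw [hj j hj']; exact hρ j]
  simp [h]

theorem tensorSq_prodState_swapAt (i : Fin n) (x y : (∀ j, Fin (dim j)) × (∀ j, Fin (dim j))) :
    tensorSq (prodState ρ) (swapAt i x) (swapAt i y) = tensorSq (prodState ρ) x y := by
  simp only [tensorSq, prodState, swapAt, ← prod_mul_distrib]
  refine prod_congr rfl fun j _ => ?_
  rcases eq_or_ne j i with rfl | hj
  · simp only [update_self]
    ring
  · simp only [update_of_ne hj]

theorem tensId_Emap_swapAt (i : Fin n) (W : Matrix (∀ j, Fin (dim j)) (∀ j, Fin (dim j)) ℂ)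
    (x y : (∀ j, Fin (dim j)) × (∀ j, Fin (dim j))) :
    tensId (Emap ρ i W) (swapAt i x) (swapAt i y) = tensId (Emap ρ i W) x y := by
  simp only [tensId, Emap, swapAt, update_self, update_idem, ← ite_and,
    update_eq_update_and_eq_iff]

theorem trace_kronecker_mul_conj_tensId_eq_sum (hρ : ∀ j, (ρ j).trace = 1) (i : Fin n)
    (B Y : Matrix (∀ j, Fin (dim j)) (∀ j, Fin (dim j)) ℂ) :
    trace ((B ⊗ₖ prodState ρ) * (Fswap i * tensId Y * Fswap i)) =
      ∑ a, ∑ b, B a (update b i (a i)) * ∑ e, ρ i e (b i) * Y b (update a i e) := by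
  have hσ := swapAt_involutive (β := fun j => Fin (dim j)) i
  have hconj : trace ((B ⊗ₖ prodState ρ) * (Fswap i * tensId Y * Fswap i)) =
      ∑ a, ∑ a', ∑ b, ∑ b', B a (update b i (b' i)) * prodState ρ a' (update b' i (b i)) *
        (if b' = update a' i (a i) then Y b (update a i (a' i)) else 0) := by
    simp only [Fswap_mul_mul_Fswap, trace, Matrix.diag, mul_apply, submatrix_apply]
    rw [Fintype.sum_prod_type]
    refine sum_congr rfl fun a _ => sum_congr rfl fun a' _ => ?_
    rw [← Fintype.sum_prod_type', ← Equiv.sum_comp (hσ.toPerm _)]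
    simp only [Involutive.coe_toPerm, hσ _]
    rfl
  rw [hconj]
  simp only [mul_ite, mul_zero, sum_ite_eq', mem_univ, if_true, update_self, update_idem]
  refine sum_congr rfl fun a _ => sum_comm.trans (sum_congr rfl fun b _ => ?_)
  calc _ = ∑ a', prodState ρ a' (update a' i (b i)) *
        (B a (update b i (a i)) * Y b (update a i (a' i))) := sum_congr rfl fun _ _ => by ring
    _ = _ := by
      rw [sum_prodState_update_mul ρ hρ i (b i)
        (fun e => B a (update b i (a i)) * Y b (update a i e)), mul_sum]
      exact sum_congr rfl fun _ _ => by ring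

theorem trace_mul_Emap_eq_sum (i : Fin n) (B Y : Matrix (∀ j, Fin (dim j)) (∀ j, Fin (dim j)) ℂ) :
    trace (B * Emap ρ i Y) =
      ∑ a, ∑ b, B a (update b i (a i)) * ∑ e, ρ i e (b i) * Y b (update a i e) := by
  refine sum_congr rfl fun a _ => ?_
  calc ∑ c, B a c * Emap ρ i Y c a
      = ∑ c, ∑ f, if c i = a i then B a c * ∑ e, ρ i e f * Y (update c i f) (update a i e)
          else 0 := by
        refine sum_congr rfl fun c _ => ?_
        unfold Emap
        split_ifs
        · rw [sum_comm, mul_sum]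
        · simp
    _ = ∑ c, ∑ f, if f = a i then B a (update c i f) * ∑ e, ρ i e (c i) * Y c (update a i e)
          else 0 := by
        rw [← sum_sum_comp_update i]
        simp only [update_self, update_idem, update_eq_self]
    _ = _ := by simp

theorem trace_mul_Emap_eq_trace_kronecker (hρ : ∀ j, (ρ j).trace = 1) (i : Fin n)
    (B Y : Matrix (∀ j, Fin (dim j)) (∀ j, Fin (dim j)) ℂ) :
    trace (B * Emap ρ i Y) = trace ((B ⊗ₖ prodState ρ) * (Fswap i * tensId Y * Fswap i)) :=
  (trace_mul_Emap_eq_sum ρ i B Y).trans (trace_kronecker_mul_conj_tensId_eq_sum ρ hρ i B Y).symm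

theorem trace_tensorSq_prodState_mul_tensId (hρ : ∀ j, (ρ j).trace = 1)
    (Z : Matrix (∀ j, Fin (dim j)) (∀ j, Fin (dim j)) ℂ) :
    trace (tensorSq (prodState ρ) * tensId Z) = trace (prodState ρ * Z) := by
  rw [tensorSq_mul_tensId, trace_kronecker, trace_prodState ρ hρ, mul_one]

theorem trace_prodState_mul_Emap (hρ : ∀ j, (ρ j).trace = 1) (i : Fin n)
    (A Y : Matrix (∀ j, Fin (dim j)) (∀ j, Fin (dim j)) ℂ) :
    trace (prodState ρ * (A * Emap ρ i Y)) =
      trace (tensorSq (prodState ρ) * (tensId A * Fswap i * tensId Y * Fswap i)) := by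
  rw [← mul_assoc, trace_mul_Emap_eq_trace_kronecker ρ hρ, ← tensorSq_mul_tensId]
  simp only [mul_assoc]

theorem trace_prodState_mul_Emap_mul_Emap (hρ : ∀ j, (ρ j).trace = 1) (i : Fin n)
    (W Y : Matrix (∀ j, Fin (dim j)) (∀ j, Fin (dim j)) ℂ) :
    trace (prodState ρ * (Emap ρ i W * Emap ρ i Y)) = trace (prodState ρ * (Emap ρ i W * Y)) := by
  have hW := commute_Fswap_of_invariant (tensId_Emap_swapAt ρ i W)
  have hP := commute_Fswap_of_invariant (tensorSq_prodState_swapAt ρ i)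
  rw [trace_prodState_mul_Emap ρ hρ, ← hW.eq, mul_assoc (Fswap i) _ (tensId Y),
    trace_mul_conj_of_commute (Fswap_mul_Fswap i) hP, tensId_mul_tensId,
    trace_tensorSq_prodState_mul_tensId ρ hρ]

theorem trace_prodState_mul_Dmap_mul_Dmap (hρ : ∀ j, (ρ j).trace = 1) (i : Fin n)
    (X : Matrix (∀ j, Fin (dim j)) (∀ j, Fin (dim j)) ℂ) :
    trace (prodState ρ * (Dmap ρ i X * Dmap ρ i X)) =
      trace (prodState ρ * (X * X)) -
        trace (tensorSq (prodState ρ) * (tensId X * Fswap i * tensId X * Fswap i)) := by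
  have hcross := trace_prodState_mul_Emap ρ hρ i X X
  have hproj := trace_prodState_mul_Emap_mul_Emap ρ hρ i X X
  simp only [Dmap, sub_mul, mul_sub, trace_sub]
  linear_combination hproj - hcross

end ProductState

end QuantumLocalVariance

theorem quantum_local_variance_formulas_general (n : ℕ) (dim : Fin n → ℕ)
    (ρ : ∀ i, Matrix (Fin (dim i)) (Fin (dim i)) ℂ)
    (hρ : ∀ i, IsState (ρ i))
    (X : Matrix (∀ j, Fin (dim j)) (∀ j, Fin (dim j)) ℂ)
    (i : Fin n) :
    (prodState ρ * (Dmap ρ i X * Dmap ρ i X)).trace =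
      (tensorSq (prodState ρ) *
        ((1 / 2 : ℂ) • ((tensId X - Fswap i * tensId X * Fswap i) *
          (tensId X - Fswap i * tensId X * Fswap i)))).trace ∧
    (prodState ρ * (Dmap ρ i X * Dmap ρ i X)).trace =
      (prodState ρ * (X * X)).trace -
      (tensorSq (prodState ρ) * (tensId X * Fswap i * tensId X * Fswap i)).trace := by
  open QuantumLocalVariance in
  have htr : ∀ j, (ρ j).trace = 1 := fun j => (hρ j).2
  have hvar := trace_prodState_mul_Dmap_mul_Dmap ρ htr i X
  refine ⟨?_, hvar⟩
  rw [hvar, Matrix.mul_smul, trace_smul, trace_mul_sq_sub_conj (Fswap_mul_Fswap i)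
    (commute_Fswap_of_invariant (tensorSq_prodState_swapAt ρ i)), tensId_mul_tensId,
    trace_tensorSq_prodState_mul_tensId ρ htr, smul_eq_mul]
  ring

/-- The two expressions for `Tr[ϱ (D_i X)²]` on the doubled space. -/
theorem quantum_local_variance_formulas (n : ℕ) (hn : 1 ≤ n) (dim : Fin n → ℕ)
    (ρ : ∀ i, Matrix (Fin (dim i)) (Fin (dim i)) ℂ)
    (hρ : ∀ i, IsState (ρ i))
    (X : Matrix (∀ j, Fin (dim j)) (∀ j, Fin (dim j)) ℂ) (hX : X.IsHermitian)
    (i : Fin n) :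
    (prodState ρ * (Dmap ρ i X * Dmap ρ i X)).trace =
      (tensorSq (prodState ρ) *
        ((1 / 2 : ℂ) • ((tensId X - Fswap i * tensId X * Fswap i) *
          (tensId X - Fswap i * tensId X * Fswap i)))).trace ∧
    (prodState ρ * (Dmap ρ i X * Dmap ρ i X)).trace =
      (prodState ρ * (X * X)).trace -
      (tensorSq (prodState ρ) * (tensId X * Fswap i * tensId X * Fswap i)).trace :=
  quantum_local_variance_formulas_general n dim ρ hρ X i
end
end

section
/- Quantum Efron–Stein decomposition: let n ≥ 1, let ρ_i be a d_i-dimensional quantum state for each i ∈ Fin n, and let ϱ be the product state on K = Π i, Fin (d i) with entries ϱ(a,b) = ∏_i ρ_i(a i, b i). Assume each ρ_i has full rank (is positive definite). Then every Hermitian matrix X indexed by K admits a unique decomposition X = ∑_{J ⊆ Fin n} X^{=J} into Hermitian matrices such that (1) each X^{=J} acts nontrivially only on the factors in J, i.e., there is a function y such that X^{=J}(a,b) = y(a↾J, b↾J) if a i = b i for all i ∉ J, and X^{=J}(a,b) = 0 otherwise; and (2) E_j X^{=J} = 0 for all j ∈ J. Moreover this unique family satisfies: (3) for each J the map X ↦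 X^{=J} is linear and ∑_{I ⊆ J} X^{=I} = (∏_{i ∉ J} E_i) X; and (4) for I ≠ J, Tr[ϱ · X^{=I} · X^{=J}] = 0. -/
open scoped BigOperators ComplexOrder

noncomputable section

/-- The product `∏_{i ∈ S} E_i` (the maps `E_i` commute, so applying them in
increasing order of the indices realizes this product). -/
def EProd {n : ℕ} {dim : Fin n → ℕ}
    (ρ : ∀ i, Matrix (Fin (dim i)) (Fin (dim i)) ℂ) (S : Finset (Fin n))
    (X : Matrix (∀ j, Fin (dim j)) (∀ j, Fin (dim j)) ℂ) :
    Matrix (∀ j, Fin (dim j)) (∀ j, Fin (dim j)) ℂ :=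
  (S.sort (· ≤ ·)).foldr (fun i Y => Emap ρ i Y) X

/-- `Y` acts nontrivially only on the tensor factors in `J`. -/
def ActsOnlyOn {n : ℕ} {dim : Fin n → ℕ} (J : Finset (Fin n))
    (Y : Matrix (∀ j, Fin (dim j)) (∀ j, Fin (dim j)) ℂ) : Prop :=
  ∃ y : (∀ i : {i : Fin n // i ∈ J}, Fin (dim i.1)) →
        (∀ i : {i : Fin n // i ∈ J}, Fin (dim i.1)) → ℂ,
    ∀ a b, Y a b =
      if ∀ i, i ∉ J → a i = b i
      then y (fun i => a i.1) (fun i => b i.1) else 0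

/-- `F` is an Efron–Stein decomposition of `X`: a family of Hermitian matrices summing
to `X`, with `F J` acting only on the factors in `J` and killed by each `E_j`, `j ∈ J`. -/
def IsESDecomp {n : ℕ} {dim : Fin n → ℕ}
    (ρ : ∀ i, Matrix (Fin (dim i)) (Fin (dim i)) ℂ)
    (X : Matrix (∀ j, Fin (dim j)) (∀ j, Fin (dim j)) ℂ)
    (F : Finset (Fin n) → Matrix (∀ j, Fin (dim j)) (∀ j, Fin (dim j)) ℂ) : Prop :=
  (∀ J, (F J).IsHermitian) ∧
  X = ∑ J, F J ∧
  (∀ J, ActsOnlyOn J (F J)) ∧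
  (∀ J, ∀ j ∈ J, Emap ρ j (F J) = 0)

namespace QES

variable {n : ℕ} {dim : Fin n → ℕ}

/-- `Y` is trivial on site `i`. -/
def TrivialAt (i : Fin n) (Y : Matrix (∀ j, Fin (dim j)) (∀ j, Fin (dim j)) ℂ) : Prop :=
  ∀ a b c, Y a b = if a i = b i then Y (Function.update a i c) (Function.update b i c) else 0

variable (ρ : ∀ i, Matrix (Fin (dim i)) (Fin (dim i)) ℂ)

lemma trivialAt_zero (i : Fin n) : TrivialAt i (0 : Matrix (∀ j, Fin (dim j)) (∀ j, Fin (dim j)) ℂ) := by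
  intro a b c; simp [Matrix.zero_apply]

lemma TrivialAt.add {i : Fin n} {Y Z : Matrix (∀ j, Fin (dim j)) (∀ j, Fin (dim j)) ℂ}
    (hY : TrivialAt i Y) (hZ : TrivialAt i Z) : TrivialAt i (Y + Z) := by
  intro a b c
  simp only [Matrix.add_apply, hY a b c, hZ a b c]
  split <;> simp

lemma TrivialAt.sub {i : Fin n} {Y Z : Matrix (∀ j, Fin (dim j)) (∀ j, Fin (dim j)) ℂ}
    (hY : TrivialAt i Y) (hZ : TrivialAt i Z) : TrivialAt i (Y - Z) := by
  intro a b c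
  simp only [Matrix.sub_apply, hY a b c, hZ a b c]
  split <;> simp

lemma trivialAt_sum {i : Fin n} {α : Type*} (s : Finset α)
    (f : α → Matrix (∀ j, Fin (dim j)) (∀ j, Fin (dim j)) ℂ)
    (h : ∀ x ∈ s, TrivialAt i (f x)) : TrivialAt i (∑ x ∈ s, f x) := by
  classical
  induction s using Finset.induction_on with
  | empty => simpa using trivialAt_zero i
  | @insert x s' hx ih =>
    rw [Finset.sum_insert hx]
    exact (h x (Finset.mem_insert_self _ _)).add (ih fun y hy => h y (Finset.mem_insert_of_mem hy))

lemma trivialAt_emap_self (i : Fin n) (X : Matrix (∀ j, Fin (dim j)) (∀ j, Fin (dim j)) ℂ) :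
    TrivialAt i (Emap ρ i X) := by
  intro a b c
  simp [Emap, Function.update_idem]

lemma TrivialAt.emap_eq {i : Fin n} {Y : Matrix (∀ j, Fin (dim j)) (∀ j, Fin (dim j)) ℂ}
    (htr : (ρ i).trace = 1) (hY : TrivialAt i Y) : Emap ρ i Y = Y := by
  funext a b
  by_cases hab : a i = b i
  · have key : ∀ e c, Y (Function.update a i c) (Function.update b i e)
        = if c = e then Y a b else 0 := by
      intro e c
      have := hY (Function.update a i c) (Function.update b i e) (b i)
      simp only [Function.update_self, Function.update_idem] at this
      have ha' : Function.update a i (b i) = a := by rw [← hab]; exact Function.update_eq_self i a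
      have hb' : Function.update b i (b i) = b := Function.update_eq_self i b
      rw [this, ha', hb']
    simp only [Emap, if_pos hab, key, mul_ite, mul_zero, Finset.sum_ite_eq',
      Finset.mem_univ, if_true]
    rw [← Finset.sum_mul]
    have htr' : ∑ e, ρ i e e = 1 := by simpa [Matrix.trace, Matrix.diag] using htr
    rw [htr', one_mul]
  · have h0 : Y a b = 0 := by
      have := hY a b (a i); rwa [if_neg hab] at this
    simp [Emap, if_neg hab, h0]


lemma trivialAt_emap_of {i j : Fin n} (hij : i ≠ j)
    {Y : Matrix (∀ k, Fin (dim k)) (∀ k, Fin (dim k)) ℂ}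
    (hY : TrivialAt i Y) : TrivialAt i (Emap ρ j Y) := by
  intro a b c
  by_cases hab : a i = b i
  · rw [if_pos hab]
    simp only [Emap]
    have hc1 : Function.update a i c j = a j := Function.update_of_ne (Ne.symm hij) _ _
    have hc2 : Function.update b i c j = b j := Function.update_of_ne (Ne.symm hij) _ _
    rw [hc1, hc2]
    by_cases hj : a j = b j
    · rw [if_pos hj, if_pos hj]
      apply Finset.sum_congr rfl; intro e _
      apply Finset.sum_congr rfl; intro f _
      congr 1
      rw [Function.update_comm hij (b := j), Function.update_comm hij (b := j)]
      have := hY (Function.update a j f) (Function.update b j e) c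
      rw [if_pos (by
        rw [Function.update_of_ne hij, Function.update_of_ne hij]; exact hab)] at this
      exact this
    · rw [if_neg hj, if_neg hj]
  · rw [if_neg hab]
    simp only [Emap]
    by_cases hj : a j = b j
    · rw [if_pos hj]
      apply Finset.sum_eq_zero; intro e _
      apply Finset.sum_eq_zero; intro f _
      have := hY (Function.update a j f) (Function.update b j e) (a i)
      rw [if_neg (by
        rw [Function.update_of_ne hij, Function.update_of_ne hij]; exact hab)] at this
      rw [this, mul_zero]
    · rw [if_neg hj]

lemma emap_add (i : Fin n) (X Y : Matrix (∀ j, Fin (dim j)) (∀ j, Fin (dim j)) ℂ) :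
    Emap ρ i (X + Y) = Emap ρ i X + Emap ρ i Y := by
  funext a b
  simp only [Emap, Matrix.add_apply, mul_add, Finset.sum_add_distrib]
  split <;> simp

lemma emap_smul (i : Fin n) (c : ℂ) (X : Matrix (∀ j, Fin (dim j)) (∀ j, Fin (dim j)) ℂ) :
    Emap ρ i (c • X) = c • Emap ρ i X := by
  funext a b
  simp only [Emap, Matrix.smul_apply, smul_eq_mul]
  split
  · rw [Finset.mul_sum]
    apply Finset.sum_congr rfl; intro e _
    rw [Finset.mul_sum]
    apply Finset.sum_congr rfl; intro f _
    ring
  · simp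

lemma emap_zero (i : Fin n) : Emap ρ i (0 : Matrix (∀ j, Fin (dim j)) (∀ j, Fin (dim j)) ℂ) = 0 := by
  funext a b; simp [Emap]

lemma emap_sub (i : Fin n) (X Y : Matrix (∀ j, Fin (dim j)) (∀ j, Fin (dim j)) ℂ) :
    Emap ρ i (X - Y) = Emap ρ i X - Emap ρ i Y := by
  funext a b
  simp only [Emap, Matrix.sub_apply, mul_sub, Finset.sum_sub_distrib]
  split <;> simp

lemma emap_sum (i : Fin n) {α : Type*} (s : Finset α)
    (f : α → Matrix (∀ j, Fin (dim j)) (∀ j, Fin (dim j)) ℂ) :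
    Emap ρ i (∑ x ∈ s, f x) = ∑ x ∈ s, Emap ρ i (f x) := by
  classical
  induction s using Finset.induction_on with
  | empty => simpa using emap_zero ρ i
  | @insert x s' hx ih =>
    rw [Finset.sum_insert hx, Finset.sum_insert hx, emap_add, ih]

lemma emap_emap_apply {i j : Fin n} (hij : i ≠ j)
    (X : Matrix (∀ k, Fin (dim k)) (∀ k, Fin (dim k)) ℂ) (a b : ∀ k, Fin (dim k)) :
    (Emap ρ i (Emap ρ j X)) a b =
      if a i = b i ∧ a j = b j then
        ∑ e, ∑ c, ∑ e', ∑ c', ρ i e c * ρ j e' c' *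
          X (Function.update (Function.update a i c) j c')
            (Function.update (Function.update b i e) j e')
      else 0 := by
  have h1 : ∀ (c : Fin (dim i)), Function.update a i c j = a j :=
    fun c => Function.update_of_ne hij.symm _ _
  have h2 : ∀ (c : Fin (dim i)), Function.update b i c j = b j :=
    fun c => Function.update_of_ne hij.symm _ _
  by_cases hi : a i = b i
  · by_cases hj : a j = b j
    · rw [if_pos ⟨hi, hj⟩]
      show (if a i = b i then _ else 0) = _
      rw [if_pos hi]
      apply Finset.sum_congr rfl; intro e _
      apply Finset.sum_congr rfl; intro c _
      show ρ i e c * (Emap ρ j X) _ _ = _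
      simp only [Emap, h1, h2, if_pos hj, Finset.mul_sum]
      apply Finset.sum_congr rfl; intro e' _
      apply Finset.sum_congr rfl; intro c' _
      ring
    · rw [if_neg (by tauto)]
      show (if a i = b i then _ else 0) = 0
      rw [if_pos hi]
      apply Finset.sum_eq_zero; intro e _
      apply Finset.sum_eq_zero; intro c _
      show ρ i e c * (Emap ρ j X) _ _ = 0
      simp only [Emap, h1, h2, if_neg hj, mul_zero]
  · rw [if_neg (by tauto)]
    show (if a i = b i then _ else 0) = 0
    rw [if_neg hi]

lemma emap_comm (i j : Fin n) (X : Matrix (∀ k, Fin (dim k)) (∀ k, Fin (dim k)) ℂ) :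
    Emap ρ i (Emap ρ j X) = Emap ρ j (Emap ρ i X) := by
  rcases eq_or_ne i j with rfl | hij
  · rfl
  funext a b
  rw [emap_emap_apply ρ hij, emap_emap_apply ρ hij.symm]
  by_cases hi : a i = b i
  · by_cases hj : a j = b j
    · rw [if_pos ⟨hi, hj⟩, if_pos ⟨hj, hi⟩]
      have flat1 : ∀ (F : Fin (dim i) → Fin (dim i) → Fin (dim j) → Fin (dim j) → ℂ),
          (∑ e, ∑ c, ∑ e', ∑ c', F e c e' c')
            = ∑ p : Fin (dim i) × Fin (dim i) × Fin (dim j) × Fin (dim j),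
                F p.1 p.2.1 p.2.2.1 p.2.2.2 := by
        intro F
        simp [Fintype.sum_prod_type]
      have flat2 : ∀ (F : Fin (dim j) → Fin (dim j) → Fin (dim i) → Fin (dim i) → ℂ),
          (∑ e, ∑ c, ∑ e', ∑ c', F e c e' c')
            = ∑ p : Fin (dim j) × Fin (dim j) × Fin (dim i) × Fin (dim i),
                F p.1 p.2.1 p.2.2.1 p.2.2.2 := by
        intro F
        simp [Fintype.sum_prod_type]
      rw [flat1, flat2]
      refine Fintype.sum_equiv
        ⟨fun p => (p.2.2.1, p.2.2.2, p.1, p.2.1), fun p => (p.2.2.1, p.2.2.2, p.1, p.2.1),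
          fun p => rfl, fun p => rfl⟩ _ _ ?_
      rintro ⟨e, c, e', c'⟩
      dsimp only [Equiv.coe_fn_mk]
      rw [Function.update_comm hij, Function.update_comm hij]
      ring
    · rw [if_neg (by tauto), if_neg (by tauto)]
  · rw [if_neg (by tauto), if_neg (by tauto)]

lemma emap_hermitian {i : Fin n} (hρh : (ρ i).IsHermitian)
    {X : Matrix (∀ j, Fin (dim j)) (∀ j, Fin (dim j)) ℂ} (hX : X.IsHermitian) :
    (Emap ρ i X).IsHermitian := by
  have hρ' : ∀ e c, star (ρ i e c) = ρ i c e := fun e c => by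
    simpa [Matrix.conjTranspose_apply] using congrFun (congrFun hρh.eq c) e
  have hX' : ∀ a b, star (X a b) = X b a := fun a b => by
    simpa [Matrix.conjTranspose_apply] using congrFun (congrFun hX.eq b) a
  show (Emap ρ i X).conjTranspose = Emap ρ i X
  funext a b
  rw [Matrix.conjTranspose_apply]
  show star (Emap ρ i X b a) = _
  by_cases hab : a i = b i
  · simp only [Emap, if_pos hab, if_pos hab.symm]
    rw [star_sum]
    rw [Finset.sum_comm]
    apply Finset.sum_congr rfl; intro e _
    rw [star_sum]
    apply Finset.sum_congr rfl; intro c _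
    rw [star_mul', hρ', hX']
  · simp only [Emap, if_neg hab, if_neg (Ne.symm hab), star_zero]


lemma foldr_emap_comm (i : Fin n) (l : List (Fin n))
    (X : Matrix (∀ j, Fin (dim j)) (∀ j, Fin (dim j)) ℂ) :
    Emap ρ i (l.foldr (fun k Y => Emap ρ k Y) X)
      = l.foldr (fun k Y => Emap ρ k Y) (Emap ρ i X) := by
  induction l with
  | nil => rfl
  | cons k l ih => simp only [List.foldr_cons]; rw [emap_comm, ih]

lemma eprod_empty (X : Matrix (∀ j, Fin (dim j)) (∀ j, Fin (dim j)) ℂ) :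
    EProd ρ ∅ X = X := by
  simp [EProd]

lemma eprod_insert {j : Fin n} {S : Finset (Fin n)} (h : j ∉ S)
    (X : Matrix (∀ j, Fin (dim j)) (∀ j, Fin (dim j)) ℂ) :
    EProd ρ (insert j S) X = Emap ρ j (EProd ρ S X) := by
  haveI : LeftCommutative (fun (i : Fin n) Y => Emap ρ i Y) := ⟨fun a b Y => emap_comm ρ a b Y⟩
  have p1 : List.Perm ((insert j S).sort (· ≤ ·)) (j :: S.sort (· ≤ ·)) :=
    (Finset.sort_perm_toList (insert j S) (· ≤ ·)).trans
      ((Finset.toList_insert h).trans (List.Perm.cons j (Finset.sort_perm_toList S (· ≤ ·)).symm))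
  exact p1.foldr_eq X

lemma eprod_insert' {j : Fin n} {S : Finset (Fin n)} (h : j ∉ S)
    (X : Matrix (∀ j, Fin (dim j)) (∀ j, Fin (dim j)) ℂ) :
    EProd ρ (insert j S) X = EProd ρ S (Emap ρ j X) := by
  rw [eprod_insert ρ h, EProd, EProd, foldr_emap_comm]

lemma eprod_add (S : Finset (Fin n)) (X Y : Matrix (∀ j, Fin (dim j)) (∀ j, Fin (dim j)) ℂ) :
    EProd ρ S (X + Y) = EProd ρ S X + EProd ρ S Y := by
  unfold EProd
  induction S.sort (· ≤ ·) with
  | nil => rfl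
  | cons k l ih => simp only [List.foldr_cons]; rw [ih, emap_add]

lemma eprod_smul (S : Finset (Fin n)) (c : ℂ)
    (X : Matrix (∀ j, Fin (dim j)) (∀ j, Fin (dim j)) ℂ) :
    EProd ρ S (c • X) = c • EProd ρ S X := by
  unfold EProd
  induction S.sort (· ≤ ·) with
  | nil => rfl
  | cons k l ih => simp only [List.foldr_cons]; rw [ih, emap_smul]

lemma eprod_zero (S : Finset (Fin n)) :
    EProd ρ S (0 : Matrix (∀ j, Fin (dim j)) (∀ j, Fin (dim j)) ℂ) = 0 := by
  unfold EProd
  induction S.sort (· ≤ ·) with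
  | nil => rfl
  | cons k l ih => simp only [List.foldr_cons]; rw [ih, emap_zero]

lemma eprod_sub (S : Finset (Fin n)) (X Y : Matrix (∀ j, Fin (dim j)) (∀ j, Fin (dim j)) ℂ) :
    EProd ρ S (X - Y) = EProd ρ S X - EProd ρ S Y := by
  unfold EProd
  induction S.sort (· ≤ ·) with
  | nil => rfl
  | cons k l ih => simp only [List.foldr_cons]; rw [ih, emap_sub]

lemma eprod_sum (S : Finset (Fin n)) {α : Type*} (s : Finset α)
    (f : α → Matrix (∀ j, Fin (dim j)) (∀ j, Fin (dim j)) ℂ) :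
    EProd ρ S (∑ x ∈ s, f x) = ∑ x ∈ s, EProd ρ S (f x) := by
  classical
  induction s using Finset.induction_on with
  | empty => simpa using eprod_zero ρ S
  | @insert x s' hx ih =>
    rw [Finset.sum_insert hx, Finset.sum_insert hx, eprod_add, ih]

lemma eprod_hermitian (hρh : ∀ i, (ρ i).IsHermitian) (S : Finset (Fin n))
    {X : Matrix (∀ j, Fin (dim j)) (∀ j, Fin (dim j)) ℂ} (hX : X.IsHermitian) :
    (EProd ρ S X).IsHermitian := by
  unfold EProd
  induction S.sort (· ≤ ·) with
  | nil => exact hX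
  | cons k l ih => exact emap_hermitian ρ (hρh k) ih

lemma trivialAt_eprod {i : Fin n} {S : Finset (Fin n)} (hi : i ∈ S)
    (X : Matrix (∀ j, Fin (dim j)) (∀ j, Fin (dim j)) ℂ) :
    TrivialAt i (EProd ρ S X) := by
  classical
  induction S using Finset.induction_on with
  | empty => simp at hi
  | @insert j S' hj ih =>
    rw [eprod_insert ρ hj]
    rcases Finset.mem_insert.mp hi with rfl | hi'
    · exact trivialAt_emap_self ρ i _
    · exact trivialAt_emap_of ρ (fun hij => hj (by rwa [hij] at hi')) (ih hi')

lemma eprod_of_trivial (htr : ∀ i, (ρ i).trace = 1) {S : Finset (Fin n)}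
    {Y : Matrix (∀ j, Fin (dim j)) (∀ j, Fin (dim j)) ℂ}
    (hY : ∀ i ∈ S, TrivialAt i Y) : EProd ρ S Y = Y := by
  classical
  induction S using Finset.induction_on with
  | empty => exact eprod_empty ρ Y
  | @insert j S' hj ih =>
    rw [eprod_insert ρ hj, ih (fun i hi => hY i (Finset.mem_insert_of_mem hi))]
    exact TrivialAt.emap_eq ρ (htr j) (hY j (Finset.mem_insert_self _ _))


def ES (ρ : ∀ i, Matrix (Fin (dim i)) (Fin (dim i)) ℂ)
    (X : Matrix (∀ j, Fin (dim j)) (∀ j, Fin (dim j)) ℂ) (J : Finset (Fin n)) :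
    Matrix (∀ j, Fin (dim j)) (∀ j, Fin (dim j)) ℂ :=
  EProd ρ Jᶜ X - ∑ I ∈ J.ssubsets.attach, ES ρ X I.1
termination_by J.card
decreasing_by exact Finset.card_lt_card (Finset.mem_ssubsets.mp I.2)

lemma es_def (X : Matrix (∀ j, Fin (dim j)) (∀ j, Fin (dim j)) ℂ) (J : Finset (Fin n)) :
    ES ρ X J = EProd ρ Jᶜ X - ∑ I ∈ J.ssubsets, ES ρ X I := by
  rw [ES]
  congr 1
  exact Finset.sum_attach _ _

lemma es_sum_powerset (X : Matrix (∀ j, Fin (dim j)) (∀ j, Fin (dim j)) ℂ) (J : Finset (Fin n)) :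
    ∑ I ∈ J.powerset, ES ρ X I = EProd ρ Jᶜ X := by
  have hJ : J ∈ J.powerset := Finset.mem_powerset_self J
  rw [← Finset.sum_erase_add _ _ hJ]
  have : J.powerset.erase J = J.ssubsets := rfl
  rw [this, es_def]
  abel

lemma es_add (X Y : Matrix (∀ j, Fin (dim j)) (∀ j, Fin (dim j)) ℂ) (J : Finset (Fin n)) :
    ES ρ (X + Y) J = ES ρ X J + ES ρ Y J := by
  induction J using Finset.strongInduction with
  | _ J ih =>
    rw [es_def, es_def, es_def, eprod_add,
      Finset.sum_congr rfl (fun I hI => ih I (Finset.mem_ssubsets.mp hI)),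
      Finset.sum_add_distrib]
    abel

lemma es_smul (c : ℂ) (X : Matrix (∀ j, Fin (dim j)) (∀ j, Fin (dim j)) ℂ) (J : Finset (Fin n)) :
    ES ρ (c • X) J = c • ES ρ X J := by
  induction J using Finset.strongInduction with
  | _ J ih =>
    rw [es_def, es_def, eprod_smul,
      Finset.sum_congr rfl (fun I hI => ih I (Finset.mem_ssubsets.mp hI)),
      ← Finset.smul_sum, smul_sub]

lemma herm_sum {α : Type*} (s : Finset α)
    (f : α → Matrix (∀ j, Fin (dim j)) (∀ j, Fin (dim j)) ℂ)
    (h : ∀ x ∈ s, (f x).IsHermitian) : (∑ x ∈ s, f x).IsHermitian := by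
  classical
  induction s using Finset.induction_on with
  | empty => simp [Matrix.isHermitian_zero]
  | @insert x s' hx ih =>
    rw [Finset.sum_insert hx]
    exact (h x (Finset.mem_insert_self _ _)).add
      (ih fun y hy => h y (Finset.mem_insert_of_mem hy))

lemma es_hermitian (hρh : ∀ i, (ρ i).IsHermitian)
    {X : Matrix (∀ j, Fin (dim j)) (∀ j, Fin (dim j)) ℂ} (hX : X.IsHermitian)
    (J : Finset (Fin n)) : (ES ρ X J).IsHermitian := by
  induction J using Finset.strongInduction with
  | _ J ih =>
    rw [es_def]
    exact (eprod_hermitian ρ hρh _ hX).sub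
      (herm_sum _ _ fun I hI => ih I (Finset.mem_ssubsets.mp hI))

lemma es_trivialAt {i : Fin n} {J : Finset (Fin n)} (hi : i ∉ J)
    (X : Matrix (∀ j, Fin (dim j)) (∀ j, Fin (dim j)) ℂ) :
    TrivialAt i (ES ρ X J) := by
  induction J using Finset.strongInduction with
  | _ J ih =>
    rw [es_def]
    exact (trivialAt_eprod ρ (Finset.mem_compl.mpr hi) X).sub
      (trivialAt_sum _ _ fun I hI => ih I (Finset.mem_ssubsets.mp hI)
        (fun hiI => hi ((Finset.mem_ssubsets.mp hI).subset hiI)))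

lemma es_emap_zero (htr : ∀ i, (ρ i).trace = 1)
    (X : Matrix (∀ j, Fin (dim j)) (∀ j, Fin (dim j)) ℂ)
    {J : Finset (Fin n)} {j : Fin n} (hj : j ∈ J) :
    Emap ρ j (ES ρ X J) = 0 := by
  induction J using Finset.strongInduction with
  | _ J ih =>
    rw [es_def, emap_sub, emap_sum]
    have h1 : Emap ρ j (EProd ρ Jᶜ X) = EProd ρ (J.erase j)ᶜ X := by
      rw [Finset.compl_erase, eprod_insert ρ (by simpa using hj)]
    rw [h1, ← es_sum_powerset,
      ← Finset.sum_filter_add_sum_filter_not J.ssubsets (fun I => j ∈ I)]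
    have h2 : ∑ I ∈ J.ssubsets.filter (fun I => j ∈ I), Emap ρ j (ES ρ X I) = 0 :=
      Finset.sum_eq_zero fun I hI => by
        obtain ⟨hI1, hI2⟩ := Finset.mem_filter.mp hI
        exact ih I (Finset.mem_ssubsets.mp hI1) hI2
    have h3 : J.ssubsets.filter (fun I => ¬ j ∈ I) = (J.erase j).powerset := by
      ext I
      simp only [Finset.mem_filter, Finset.mem_ssubsets, Finset.mem_powerset,
        Finset.subset_erase]
      constructor
      · rintro ⟨hI1, hI2⟩; exact ⟨hI1.subset, hI2⟩
      · rintro ⟨hI1, hI2⟩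
        refine ⟨Finset.ssubset_iff_subset_ne.mpr ⟨hI1, ?_⟩, hI2⟩
        rintro rfl; exact hI2 hj
    have h4 : ∀ I ∈ J.ssubsets.filter (fun I => ¬ j ∈ I),
        Emap ρ j (ES ρ X I) = ES ρ X I := fun I hI =>
      TrivialAt.emap_eq ρ (htr j) (es_trivialAt ρ (Finset.mem_filter.mp hI).2 X)
    rw [h2, Finset.sum_congr rfl h4, h3, zero_add, sub_self]


lemma trivialAt_of_actsOnlyOn {J : Finset (Fin n)}
    {Y : Matrix (∀ j, Fin (dim j)) (∀ j, Fin (dim j)) ℂ}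
    (h : ActsOnlyOn J Y) {i : Fin n} (hiJ : i ∉ J) : TrivialAt i Y := by
  obtain ⟨y, hy⟩ := h
  intro a b c
  have hres_a : (fun k : {k : Fin n // k ∈ J} => Function.update a i c k.1)
      = fun k : {k : Fin n // k ∈ J} => a k.1 :=
    funext fun k => Function.update_of_ne (fun he => hiJ (by rw [← he]; exact k.2)) _ _
  have hres_b : (fun k : {k : Fin n // k ∈ J} => Function.update b i c k.1)
      = fun k : {k : Fin n // k ∈ J} => b k.1 :=
    funext fun k => Function.update_of_ne (fun he => hiJ (by rw [← he]; exact k.2)) _ _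
  by_cases hab : a i = b i
  · rw [if_pos hab, hy a b, hy (Function.update a i c) (Function.update b i c),
      hres_a, hres_b]
    have hiff : (∀ k, k ∉ J → Function.update a i c k = Function.update b i c k)
        ↔ (∀ k, k ∉ J → a k = b k) := by
      constructor
      · intro h' k hk
        rcases eq_or_ne k i with rfl | hki
        · exact hab
        · have := h' k hk
          rwa [Function.update_of_ne hki, Function.update_of_ne hki] at this
      · intro h' k hk
        rcases eq_or_ne k i with rfl | hki
        · rw [Function.update_self, Function.update_self]
        · rw [Function.update_of_ne hki, Function.update_of_ne hki]
          exact h' k hk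
    by_cases hc : ∀ k, k ∉ J → a k = b k
    · rw [if_pos hc, if_pos (hiff.mpr hc)]
    · rw [if_neg hc, if_neg (fun h' => hc (hiff.mp h'))]
  · rw [if_neg hab, hy a b, if_neg (fun h' => hab (h' i hiJ))]

lemma actsOnlyOn_of_trivial {J : Finset (Fin n)}
    {Y : Matrix (∀ j, Fin (dim j)) (∀ j, Fin (dim j)) ℂ}
    (hY : ∀ i ∉ J, TrivialAt i Y) : ActsOnlyOn J Y := by
  classical
  by_cases hK : Nonempty (∀ j, Fin (dim j))
  · obtain ⟨a₀⟩ := hK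
    refine ⟨fun u v => Y (fun i => if h : i ∈ J then u ⟨i, h⟩ else a₀ i)
      (fun i => if h : i ∈ J then v ⟨i, h⟩ else a₀ i), ?_⟩
    intro a b
    by_cases hcond : ∀ i, i ∉ J → a i = b i
    · rw [if_pos hcond]
      set ov : (∀ j, Fin (dim j)) → Finset (Fin n) → (∀ j, Fin (dim j)) :=
        fun a s => fun i => if i ∈ s then a₀ i else a i with hov
      have main : ∀ s : Finset (Fin n), (∀ i ∈ s, i ∉ J) →
          Y a b = Y (ov a s) (ov b s) := by
        intro s
        induction s using Finset.induction_on with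
        | empty =>
          intro _
          have h1 : ov a ∅ = a := funext fun i => by simp [hov]
          have h2 : ov b ∅ = b := funext fun i => by simp [hov]
          rw [h1, h2]
        | @insert i s' hi ihs =>
          intro hins
          have hiJ : i ∉ J := hins i (Finset.mem_insert_self _ _)
          have prev := ihs (fun k hk => hins k (Finset.mem_insert_of_mem hk))
          have heq : ov a s' i = ov b s' i := by
            simp only [hov, if_neg hi]
            exact hcond i hiJ
          have step := hY i hiJ (ov a s') (ov b s') (a₀ i)
          rw [if_pos heq] at step
          have hua : Function.update (ov a s') i (a₀ i) = ov a (insert i s') := by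
            funext k
            rcases eq_or_ne k i with rfl | hki
            · simp [hov]
            · simp [hov, Function.update_of_ne hki, Finset.mem_insert, hki]
          have hub : Function.update (ov b s') i (a₀ i) = ov b (insert i s') := by
            funext k
            rcases eq_or_ne k i with rfl | hki
            · simp [hov]
            · simp [hov, Function.update_of_ne hki, Finset.mem_insert, hki]
          rw [prev, step, hua, hub]
      have hfin := main (Finset.univ.filter (· ∉ J)) (fun i hi => (Finset.mem_filter.mp hi).2)
      have hexta : ov a (Finset.univ.filter (· ∉ J))
          = fun i => if h : i ∈ J then a i else a₀ i := by
        funext i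
        by_cases hiJ : i ∈ J <;> simp [hov, hiJ]
      have hextb : ov b (Finset.univ.filter (· ∉ J))
          = fun i => if h : i ∈ J then b i else a₀ i := by
        funext i
        by_cases hiJ : i ∈ J <;> simp [hov, hiJ]
      rw [hfin, hexta, hextb]
    · rw [if_neg hcond]
      push_neg at hcond
      obtain ⟨i, hiJ, hne⟩ := hcond
      have := hY i hiJ a b (a i)
      rwa [if_neg hne] at this
  · exact ⟨fun _ _ => 0, fun a _ => absurd ⟨a⟩ hK⟩


lemma decomp_sum_powerset (htr : ∀ i, (ρ i).trace = 1)
    {X : Matrix (∀ j, Fin (dim j)) (∀ j, Fin (dim j)) ℂ}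
    {F : Finset (Fin n) → Matrix (∀ j, Fin (dim j)) (∀ j, Fin (dim j)) ℂ}
    (hF : IsESDecomp ρ X F) (J : Finset (Fin n)) :
    ∑ I ∈ J.powerset, F I = EProd ρ Jᶜ X := by
  obtain ⟨hherm, hsum, hacts, hkill⟩ := hF
  symm
  calc EProd ρ Jᶜ X = EProd ρ Jᶜ (∑ I : Finset (Fin n), F I) := by rw [← hsum]
    _ = ∑ I : Finset (Fin n), EProd ρ Jᶜ (F I) := eprod_sum ρ _ _ _
    _ = ∑ I : Finset (Fin n), (if I ∈ J.powerset then F I else 0) := by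
        apply Finset.sum_congr rfl
        intro I _
        by_cases hIJ : I ⊆ J
        · rw [if_pos (Finset.mem_powerset.mpr hIJ)]
          exact eprod_of_trivial ρ htr fun i hi =>
            trivialAt_of_actsOnlyOn (hacts I)
              (fun hiI => (Finset.mem_compl.mp hi) (hIJ hiI))
        · rw [if_neg (fun hc => hIJ (Finset.mem_powerset.mp hc))]
          obtain ⟨j, hjI, hjJ⟩ := Finset.not_subset.mp hIJ
          have hins : Jᶜ = insert j (Jᶜ.erase j) :=
            (Finset.insert_erase (Finset.mem_compl.mpr hjJ)).symm
          rw [hins, eprod_insert' ρ (Finset.notMem_erase j _), hkill I j hjI, eprod_zero]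
    _ = ∑ I ∈ J.powerset, F I := by
        rw [Finset.sum_ite_mem, Finset.univ_inter]

lemma decomp_unique (htr : ∀ i, (ρ i).trace = 1)
    {X : Matrix (∀ j, Fin (dim j)) (∀ j, Fin (dim j)) ℂ}
    {F : Finset (Fin n) → Matrix (∀ j, Fin (dim j)) (∀ j, Fin (dim j)) ℂ}
    (hF : IsESDecomp ρ X F) : F = ES ρ X := by
  funext J
  induction J using Finset.strongInduction with
  | _ J ih =>
    have split : ∀ (G : Finset (Fin n) → Matrix (∀ j, Fin (dim j)) (∀ j, Fin (dim j)) ℂ),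
        ∑ I ∈ J.powerset, G I = ∑ I ∈ J.ssubsets, G I + G J := fun G =>
      (Finset.sum_erase_add _ _ (Finset.mem_powerset_self J)).symm
    have h1 := decomp_sum_powerset ρ htr hF J
    have h2 := es_sum_powerset ρ X J
    rw [split] at h1 h2
    rw [Finset.sum_congr rfl (fun I hI => ih I (Finset.mem_ssubsets.mp hI))] at h1
    exact add_left_cancel (h1.trans h2.symm)


def Dfun (j : Fin n) (a b : ∀ k, Fin (dim k)) : ℂ :=
  ∏ i ∈ Finset.univ.erase j, ρ i (a i) (b i)

lemma prodState_split (j : Fin n) (a b : ∀ k, Fin (dim k)) :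
    prodState ρ a b = ρ j (a j) (b j) * Dfun ρ j a b :=
  (Finset.mul_prod_erase _ _ (Finset.mem_univ j)).symm

lemma dfun_update_left (j : Fin n) (a b : ∀ k, Fin (dim k)) (x : Fin (dim j)) :
    Dfun ρ j (Function.update a j x) b = Dfun ρ j a b :=
  Finset.prod_congr rfl fun i hi => by
    rw [Function.update_of_ne (Finset.ne_of_mem_erase hi)]

lemma dfun_update_right (j : Fin n) (a b : ∀ k, Fin (dim k)) (x : Fin (dim j)) :
    Dfun ρ j a (Function.update b j x) = Dfun ρ j a b :=
  Finset.prod_congr rfl fun i hi => by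
    rw [Function.update_of_ne (Finset.ne_of_mem_erase hi)]

def gL (j : Fin n) (A B : Matrix (∀ k, Fin (dim k)) (∀ k, Fin (dim k)) ℂ)
    (p : (∀ k, Fin (dim k)) × (∀ k, Fin (dim k)) × (∀ k, Fin (dim k))
          × Fin (dim j) × Fin (dim j)) : ℂ :=
  ρ j (p.1 j) (p.2.2.1 j) * Dfun ρ j p.1 p.2.2.1 * ρ j p.2.2.2.1 p.2.2.2.2 *
    A (Function.update p.2.2.1 j p.2.2.2.2) (Function.update p.2.1 j p.2.2.2.1) * B p.2.1 p.1

def gR (j : Fin n) (A B : Matrix (∀ k, Fin (dim k)) (∀ k, Fin (dim k)) ℂ)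
    (p : (∀ k, Fin (dim k)) × (∀ k, Fin (dim k)) × (∀ k, Fin (dim k))
          × Fin (dim j) × Fin (dim j)) : ℂ :=
  ρ j (p.1 j) (p.2.2.1 j) * Dfun ρ j p.1 p.2.2.1 * ρ j p.2.2.2.1 p.2.2.2.2 *
    A p.2.2.1 p.2.1 * B (Function.update p.2.1 j p.2.2.2.2) (Function.update p.1 j p.2.2.2.1)

lemma trace_mul3 (Pm Qm Rm : Matrix (∀ k, Fin (dim k)) (∀ k, Fin (dim k)) ℂ) :
    (Pm * Qm * Rm).trace = ∑ a, ∑ c, ∑ b, Pm a b * Qm b c * Rm c a := by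
  simp only [Matrix.trace, Matrix.diag, Matrix.mul_apply, Finset.sum_mul]

lemma keyL (j : Fin n) (A B : Matrix (∀ k, Fin (dim k)) (∀ k, Fin (dim k)) ℂ) :
    (prodState ρ * Emap ρ j A * B).trace
      = ∑ p ∈ Finset.univ.filter
          (fun p : (∀ k, Fin (dim k)) × (∀ k, Fin (dim k)) × (∀ k, Fin (dim k))
              × Fin (dim j) × Fin (dim j) => p.2.2.1 j = p.2.1 j),
          gL ρ j A B p := by
  rw [trace_mul3, Finset.sum_filter]
  simp only [Fintype.sum_prod_type]
  apply Finset.sum_congr rfl; intro a _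
  apply Finset.sum_congr rfl; intro c _
  apply Finset.sum_congr rfl; intro b _
  by_cases h : b j = c j
  · simp only [Emap, if_pos h, gL, Finset.mul_sum, Finset.sum_mul]
    apply Finset.sum_congr rfl; intro e _
    apply Finset.sum_congr rfl; intro f _
    rw [prodState_split ρ j]
    ring
  · simp only [Emap, if_neg h, mul_zero, zero_mul, Finset.sum_const_zero]

lemma keyR (j : Fin n) (A B : Matrix (∀ k, Fin (dim k)) (∀ k, Fin (dim k)) ℂ) :
    (prodState ρ * A * Emap ρ j B).trace
      = ∑ p ∈ Finset.univ.filter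
          (fun p : (∀ k, Fin (dim k)) × (∀ k, Fin (dim k)) × (∀ k, Fin (dim k))
              × Fin (dim j) × Fin (dim j) => p.2.1 j = p.1 j),
          gR ρ j A B p := by
  rw [trace_mul3, Finset.sum_filter]
  simp only [Fintype.sum_prod_type]
  apply Finset.sum_congr rfl; intro a _
  apply Finset.sum_congr rfl; intro c _
  apply Finset.sum_congr rfl; intro b _
  by_cases h : c j = a j
  · simp only [Emap, if_pos h, gR, Finset.mul_sum, Finset.sum_mul]
    apply Finset.sum_congr rfl; intro e _
    apply Finset.sum_congr rfl; intro f _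
    rw [prodState_split ρ j]
    ring
  · simp only [Emap, if_neg h, mul_zero, zero_mul, Finset.sum_const_zero]

lemma emap_adjoint (j : Fin n) (A B : Matrix (∀ k, Fin (dim k)) (∀ k, Fin (dim k)) ℂ) :
    (prodState ρ * Emap ρ j A * B).trace = (prodState ρ * A * Emap ρ j B).trace := by
  rw [keyL, keyR]
  refine Finset.sum_nbij'
    (fun p => (Function.update p.1 j p.2.2.2.1, Function.update p.2.1 j p.2.2.2.1,
      Function.update p.2.2.1 j p.2.2.2.2, p.1 j, p.2.2.1 j))
    (fun p => (Function.update p.1 j p.2.2.2.1, Function.update p.2.1 j p.2.2.2.2,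
      Function.update p.2.2.1 j p.2.2.2.2, p.2.1 j, p.2.2.1 j))
    ?_ ?_ ?_ ?_ ?_
  · rintro ⟨a, c, b, e, f⟩ _
    simp [Function.update_self]
  · rintro ⟨a, c, b, e, f⟩ _
    simp [Function.update_self]
  · rintro ⟨a, c, b, e, f⟩ hp
    rw [Finset.mem_filter] at hp
    have hbc : b j = c j := hp.2
    simp only [Function.update_idem, Function.update_self]
    refine Prod.ext ?_ (Prod.ext ?_ (Prod.ext ?_ rfl))
    · exact Function.update_eq_self j a
    · rw [hbc]; exact Function.update_eq_self j c
    · exact Function.update_eq_self j b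
  · rintro ⟨a, c, b, e, f⟩ hp
    rw [Finset.mem_filter] at hp
    have hca : c j = a j := hp.2
    simp only [Function.update_idem, Function.update_self]
    refine Prod.ext ?_ (Prod.ext ?_ (Prod.ext ?_ rfl))
    · rw [hca]; exact Function.update_eq_self j a
    · exact Function.update_eq_self j c
    · exact Function.update_eq_self j b
  · rintro ⟨a, c, b, e, f⟩ hp
    rw [Finset.mem_filter] at hp
    have hbc : b j = c j := hp.2
    simp only [gL, gR, Function.update_self, Function.update_idem,
      dfun_update_left, dfun_update_right]
    rw [show Function.update c j (b j) = c from by rw [hbc]; exact Function.update_eq_self j c,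
      Function.update_eq_self j a]
    ring


lemma es_orthogonal (htr : ∀ i, (ρ i).trace = 1)
    (X : Matrix (∀ j, Fin (dim j)) (∀ j, Fin (dim j)) ℂ)
    {I J : Finset (Fin n)} (hIJ : I ≠ J) :
    (prodState ρ * ES ρ X I * ES ρ X J).trace = 0 := by
  have hcase : ¬ I ⊆ J ∨ ¬ J ⊆ I := by
    by_contra h; push_neg at h; exact hIJ (Finset.Subset.antisymm h.1 h.2)
  rcases hcase with h | h
  · obtain ⟨j, hjI, hjJ⟩ := Finset.not_subset.mp h
    have hB : Emap ρ j (ES ρ X J) = ES ρ X J :=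
      TrivialAt.emap_eq ρ (htr j) (es_trivialAt ρ hjJ X)
    calc (prodState ρ * ES ρ X I * ES ρ X J).trace
        = (prodState ρ * ES ρ X I * Emap ρ j (ES ρ X J)).trace := by rw [hB]
      _ = (prodState ρ * Emap ρ j (ES ρ X I) * ES ρ X J).trace :=
          (emap_adjoint ρ j _ _).symm
      _ = 0 := by
          rw [es_emap_zero ρ htr X hjI, Matrix.mul_zero, Matrix.zero_mul, Matrix.trace_zero]
  · obtain ⟨j, hjJ, hjI⟩ := Finset.not_subset.mp h
    have hA : Emap ρ j (ES ρ X I) = ES ρ X I :=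
      TrivialAt.emap_eq ρ (htr j) (es_trivialAt ρ hjI X)
    calc (prodState ρ * ES ρ X I * ES ρ X J).trace
        = (prodState ρ * Emap ρ j (ES ρ X I) * ES ρ X J).trace := by rw [hA]
      _ = (prodState ρ * ES ρ X I * Emap ρ j (ES ρ X J)).trace := emap_adjoint ρ j _ _
      _ = 0 := by
          rw [es_emap_zero ρ htr X hjJ, Matrix.mul_zero, Matrix.trace_zero]

lemma es_isESDecomp (hρh : ∀ i, (ρ i).IsHermitian) (htr : ∀ i, (ρ i).trace = 1)
    {X : Matrix (∀ j, Fin (dim j)) (∀ j, Fin (dim j)) ℂ} (hX : X.IsHermitian) :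
    IsESDecomp ρ X (ES ρ X) := by
  refine ⟨fun J => es_hermitian ρ hρh hX J, ?_, ?_, ?_⟩
  · have : ∑ J : Finset (Fin n), ES ρ X J = X := by
      rw [← Finset.powerset_univ, es_sum_powerset, Finset.compl_univ, eprod_empty]
    exact this.symm
  · exact fun J => actsOnlyOn_of_trivial (fun i hi => es_trivialAt ρ hi X)
  · exact fun J j hj => es_emap_zero ρ htr X hj

end QES

/-- Quantum Efron–Stein decomposition: existence, uniqueness, linearity,
partial sums, and orthogonality. -/
theorem quantum_efron_stein_decomposition (n : ℕ) (hn : 1 ≤ n) (dim : Fin n → ℕ)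
    (ρ : ∀ i, Matrix (Fin (dim i)) (Fin (dim i)) ℂ)
    (hρ : ∀ i, IsState (ρ i)) (hpd : ∀ i, (ρ i).PosDef) :
    (∀ X : Matrix (∀ j, Fin (dim j)) (∀ j, Fin (dim j)) ℂ, X.IsHermitian →
      ∃! F, IsESDecomp ρ X F) ∧
    (∀ G : Matrix (∀ j, Fin (dim j)) (∀ j, Fin (dim j)) ℂ →
          Finset (Fin n) → Matrix (∀ j, Fin (dim j)) (∀ j, Fin (dim j)) ℂ,
      (∀ X, X.IsHermitian → IsESDecomp ρ X (G X)) →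
      ((∀ X Y, X.IsHermitian → Y.IsHermitian →
          ∀ J, G (X + Y) J = G X J + G Y J) ∧
        (∀ X, X.IsHermitian → ∀ c : ℝ, ∀ J, G ((c : ℂ) • X) J = (c : ℂ) • G X J) ∧
        (∀ X, X.IsHermitian → ∀ J, ∑ I ∈ J.powerset, G X I = EProd ρ Jᶜ X) ∧
        (∀ X, X.IsHermitian → ∀ I J, I ≠ J →
          (prodState ρ * G X I * G X J).trace = 0))) := by
  have hherm : ∀ i, (ρ i).IsHermitian := fun i => (hρ i).1.1
  have htr : ∀ i, (ρ i).trace = 1 := fun i => (hρ i).2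
  constructor
  · intro X hX
    exact ⟨QES.ES ρ X, QES.es_isESDecomp ρ hherm htr hX,
      fun F hF => QES.decomp_unique ρ htr hF⟩
  · intro G hG
    have hGes : ∀ X, X.IsHermitian → G X = QES.ES ρ X := fun X hX =>
      QES.decomp_unique ρ htr (hG X hX)
    refine ⟨?_, ?_, ?_, ?_⟩
    · intro X Y hX hY J
      rw [hGes _ (hX.add hY), hGes X hX, hGes Y hY, QES.es_add]
    · intro X hX c J
      have hcX : ((c : ℂ) • X).IsHermitian := by
        rw [Matrix.IsHermitian, Matrix.conjTranspose_smul, hX.eq, Complex.star_def,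
          Complex.conj_ofReal]
      rw [hGes _ hcX, hGes X hX, QES.es_smul]
    · intro X hX J
      rw [← QES.es_sum_powerset ρ X J]
      exact Finset.sum_congr rfl fun I _ => by rw [hGes X hX]
    · intro X hX I J hIJ
      rw [hGes X hX]
      exact QES.es_orthogonal ρ htr X hIJ
end
end

section
/- Concavity deficit of the Bures χ²-divergence: let q be a probability vector on Fin d with q i ≥ γ > 0 for all i, let σ = diag(q), let ρ_1, …, ρ_T be d-dimensional quantum states, and let ρ = (1/T)∑_t ρ_t. Then (1/T)·∑_{t=1}^T (1 + D²_{Bχ}(ρ_t‖σ)) ≤ √(d/γ)·√(D²_{Bχ}(ρ‖σ)) + d. -/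
/-!
Let `p` be the diagonal of the average state `ρ`. Positivity gives `|ρ(i,j)|² ≤ ρ(i,i) ρ(j,j)`, and
together with the harmonic–arithmetic mean inequality `2/(q i + q j) ≤ (1/q i + 1/q j)/2` this
bounds `1 + D²(ρ_t‖σ)` by `∑ i, ρ_t(i,i) / q i`, which is linear in `ρ_t`. Averaging over `t` gives
`∑ i, p i / q i = d + ∑ i, (p i - q i) / q i`, and Cauchy–Schwarz bounds the last sum by
`√(∑ i, 1 / q i) · √χ²(p‖q) ≤ √(d/γ) · √χ²(p‖q)`. Finally `χ²(p‖q)` is the diagonal part of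
`D²(ρ‖σ)`, whose off-diagonal terms are nonnegative.
-/

open scoped BigOperators ComplexOrder
noncomputable section

/-- Average of `T` states. -/
def avgState {d T : ℕ} (ρ : Fin T → Matrix (Fin d) (Fin d) ℂ) :
    Matrix (Fin d) (Fin d) ℂ :=
  ((T : ℂ))⁻¹ • ∑ t, ρ t

/-- Bures χ²-divergence of `ρ` from `σ = diag q`. -/
def DBchi {d : ℕ} (q : Fin d → ℝ) (ρ : Matrix (Fin d) (Fin d) ℂ) : ℝ :=
  (∑ i, ∑ j, (2 / (q i + q j)) * ‖ρ i j‖ ^ 2) - 1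

theorem Matrix.PosSemidef.norm_sq_apply_le {𝕜 n : Type*} [RCLike 𝕜] [Fintype n]
    {A : Matrix n n 𝕜} (hA : A.PosSemidef) (i j : n) :
    ‖A i j‖ ^ 2 ≤ RCLike.re (A i i) * RCLike.re (A j j) := by
  classical
  have hdet := (hA.submatrix ![i, j]).det_nonneg
  simp only [Matrix.det_fin_two, Matrix.submatrix_apply, Matrix.cons_val_zero,
    Matrix.cons_val_one] at hdet
  rw [← hA.1.apply j i, ← hA.1.coe_re_apply_self i, ← hA.1.coe_re_apply_self j, RCLike.star_def,
    RCLike.mul_conj] at hdet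
  exact_mod_cast sub_nonneg.mp hdet

theorem two_div_add_le_inv_add_inv_div_two {x y : ℝ} (hx : 0 < x) (hy : 0 < y) :
    2 / (x + y) ≤ (x⁻¹ + y⁻¹) / 2 := by
  rw [div_le_div_iff₀ (by positivity) two_pos, inv_add_inv hx.ne' hy.ne', div_mul_eq_mul_div,
    le_div_iff₀ (by positivity)]
  nlinarith [sq_nonneg (x - y)]

def chiSqDiv {ι : Type*} [Fintype ι] (p q : ι → ℝ) : ℝ :=
  ∑ i, (p i - q i) ^ 2 / q i

section

variable {ι : Type*} [Fintype ι] {p q : ι → ℝ}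

theorem sum_sum_two_div_add_mul_le (ha : ∀ i, 0 ≤ p i) (hq : ∀ i, 0 < q i) :
    ∑ i, ∑ j, 2 / (q i + q j) * (p i * p j) ≤ (∑ i, p i / q i) * ∑ i, p i := by
  calc ∑ i, ∑ j, 2 / (q i + q j) * (p i * p j)
      ≤ ∑ i, ∑ j, ((q i)⁻¹ + (q j)⁻¹) / 2 * (p i * p j) := by
        refine Finset.sum_le_sum fun i _ => Finset.sum_le_sum fun j _ => ?_
        exact mul_le_mul_of_nonneg_right (two_div_add_le_inv_add_inv_div_two (hq i) (hq j))
          (mul_nonneg (ha i) (ha j))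
    _ = ((∑ i, p i / q i) * ∑ i, p i + (∑ i, p i) * ∑ i, p i / q i) / 2 := by
        simp only [Finset.sum_mul_sum, ← Finset.sum_add_distrib, Finset.sum_div]
        congr! 2 with i _ j _
        ring
    _ = (∑ i, p i / q i) * ∑ i, p i := by ring

theorem chiSqDiv_eq_sum_sq_div_sub_one (hq : ∀ i, 0 < q i) (hp1 : ∑ i, p i = 1)
    (hq1 : ∑ i, q i = 1) : chiSqDiv p q = ∑ i, p i ^ 2 / q i - 1 := by
  have h : ∀ i, (p i - q i) ^ 2 / q i = p i ^ 2 / q i - 2 * p i + q i := by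
    intro i
    field_simp [(hq i).ne']
    ring
  simp only [chiSqDiv, h, Finset.sum_add_distrib, Finset.sum_sub_distrib, ← Finset.mul_sum, hp1,
    hq1]
  ring

theorem sum_div_le_card_add_sqrt_mul_sqrt_chiSqDiv {γ : ℝ} (hγ : 0 < γ) (hq : ∀ i, γ ≤ q i) :
    ∑ i, p i / q i ≤ Fintype.card ι + √(Fintype.card ι / γ) * √(chiSqDiv p q) := by
  have hq0 : ∀ i, 0 < q i := fun i => hγ.trans_le (hq i)
  have hsplit : ∑ i, p i / q i = Fintype.card ι + ∑ i, (p i - q i) / q i := by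
    simp only [sub_div, Finset.sum_sub_distrib, fun i => div_self (hq0 i).ne']
    simp
  have hcs : (∑ i, (p i - q i) / q i) ^ 2 ≤ (∑ i, 1 / q i) * chiSqDiv p q :=
    Finset.sum_sq_le_sum_mul_sum_of_sq_le_mul _ (fun i _ => (one_div_pos.2 (hq0 i)).le)
      (fun i _ => div_nonneg (sq_nonneg _) (hq0 i).le) fun i _ => by
        field_simp [(hq0 i).ne']
        rfl
  have hinv : ∑ i, 1 / q i ≤ Fintype.card ι / γ := by
    calc ∑ i, 1 / q i ≤ ∑ _i : ι, 1 / γ :=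
          Finset.sum_le_sum fun i _ => one_div_le_one_div_of_le hγ (hq i)
      _ = Fintype.card ι / γ := by simp [div_eq_mul_inv]
  rw [hsplit, ← Real.sqrt_mul (by positivity)]
  gcongr
  calc ∑ i, (p i - q i) / q i ≤ |∑ i, (p i - q i) / q i| := le_abs_self _
    _ ≤ √((∑ i, 1 / q i) * chiSqDiv p q) := Real.abs_le_sqrt hcs
    _ ≤ √(Fintype.card ι / γ * chiSqDiv p q) := by
      gcongr
      exact Finset.sum_nonneg fun i _ => div_nonneg (sq_nonneg _) (hq0 i).le

end

namespace IsState

variable {d : ℕ} {ρ : Matrix (Fin d) (Fin d) ℂ} {q : Fin d → ℝ}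

theorem re_apply_self_nonneg (hρ : IsState ρ) (i : Fin d) : 0 ≤ (ρ i i).re :=
  (Complex.nonneg_iff.mp hρ.1.diag_nonneg).1

theorem sum_re_apply_self (hρ : IsState ρ) : ∑ i, (ρ i i).re = 1 := by
  simpa [Matrix.trace, Complex.re_sum] using congrArg Complex.re hρ.2

theorem one_add_DBchi_le (hρ : IsState ρ) (hq : ∀ i, 0 < q i) :
    1 + DBchi q ρ ≤ ∑ i, (ρ i i).re / q i := by
  calc 1 + DBchi q ρ = ∑ i, ∑ j, 2 / (q i + q j) * ‖ρ i j‖ ^ 2 := by simp [DBchi]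
    _ ≤ ∑ i, ∑ j, 2 / (q i + q j) * ((ρ i i).re * (ρ j j).re) := by
        gcongr with i _ j _
        · exact div_nonneg zero_le_two (add_pos (hq i) (hq j)).le
        · exact hρ.1.norm_sq_apply_le i j
    _ ≤ (∑ i, (ρ i i).re / q i) * ∑ i, (ρ i i).re :=
        sum_sum_two_div_add_mul_le hρ.re_apply_self_nonneg hq
    _ = ∑ i, (ρ i i).re / q i := by rw [hρ.sum_re_apply_self, mul_one]

theorem chiSqDiv_le_DBchi (hρ : IsState ρ) (hq : ∀ i, 0 < q i) (hq1 : ∑ i, q i = 1) :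
    chiSqDiv (fun i => (ρ i i).re) q ≤ DBchi q ρ := by
  rw [chiSqDiv_eq_sum_sq_div_sub_one hq hρ.sum_re_apply_self hq1, DBchi]
  gcongr with i
  calc (ρ i i).re ^ 2 / q i ≤ ‖ρ i i‖ ^ 2 / q i := by
        gcongr
        exacts [(hq i).le, hρ.re_apply_self_nonneg i, Complex.re_le_norm _]
    _ = 2 / (q i + q i) * ‖ρ i i‖ ^ 2 := by
        field_simp [(hq i).ne']
        ring
    _ ≤ ∑ j, 2 / (q i + q j) * ‖ρ i j‖ ^ 2 :=
        Finset.single_le_sum (f := fun j => 2 / (q i + q j) * ‖ρ i j‖ ^ 2)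
          (fun j _ => by have := hq i; have := hq j; positivity) (Finset.mem_univ i)

end IsState

theorem isState_avgState {d T : ℕ} (hT : T ≠ 0) {ρ : Fin T → Matrix (Fin d) (Fin d) ℂ}
    (hρ : ∀ t, IsState (ρ t)) : IsState (avgState ρ) := by
  refine ⟨(Matrix.posSemidef_sum _ fun t _ => (hρ t).1).smul (by positivity), ?_⟩
  simp [avgState, Matrix.trace_sum, fun t => (hρ t).2, hT]

theorem re_avgState_apply {d T : ℕ} (ρ : Fin T → Matrix (Fin d) (Fin d) ℂ) (i j : Fin d) :
    (avgState ρ i j).re = (T : ℝ)⁻¹ * ∑ t, (ρ t i j).re := by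
  simp [avgState, Matrix.sum_apply, Complex.re_sum]

/-- Concavity deficit of the Bures χ²-divergence. -/
theorem concavity_deficit_Bures_chisq (d T : ℕ) (hT : 1 ≤ T) (γ : ℝ) (hγ : 0 < γ)
    (q : Fin d → ℝ) (hq : ∀ i, γ ≤ q i) (hq1 : (∑ i, q i) = 1)
    (ρ : Fin T → Matrix (Fin d) (Fin d) ℂ) (hρ : ∀ t, IsState (ρ t)) :
    ((T : ℝ))⁻¹ * ∑ t, (1 + DBchi q (ρ t)) ≤
      Real.sqrt ((d : ℝ) / γ) * Real.sqrt (DBchi q (avgState ρ)) + d := by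
  have hq0 : ∀ i, 0 < q i := fun i => hγ.trans_le (hq i)
  calc (T : ℝ)⁻¹ * ∑ t, (1 + DBchi q (ρ t))
      ≤ (T : ℝ)⁻¹ * ∑ t, ∑ i, (ρ t i i).re / q i := by
        gcongr with t
        exact (hρ t).one_add_DBchi_le hq0
    _ = ∑ i, (avgState ρ i i).re / q i := by
        simp only [re_avgState_apply, Finset.mul_sum, Finset.sum_div, mul_div_assoc]
        rw [Finset.sum_comm]
    _ ≤ d + √(d / γ) * √(chiSqDiv (fun i => (avgState ρ i i).re) q) := by
        simpa using
          sum_div_le_card_add_sqrt_mul_sqrt_chiSqDiv (p := fun i => (avgState ρ i i).re) hγ hq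
    _ ≤ d + √(d / γ) * √(DBchi q (avgState ρ)) := by
        gcongr
        exact (isState_avgState (by omega) hρ).chiSqDiv_le_DBchi hq0 hq1
    _ = √(d / γ) * √(DBchi q (avgState ρ)) + d := add_comm _ _
end
end

section
/- Let q be a probability vector on Fin d with q i ≥ γ > 0 for all i, let σ = diag(q), let ρ be a d-dimensional quantum state, and set Δ := ρ − σ and μ := D²_{Bχ}(ρ‖σ). Working on the triple tensor space indexed by (Fin 3 → Fin d), with C_{12} the C-observable applied to factors 1,2 and C_{13} the C-observable applied to factors 1,3, the following hold: (i) Re(Tr[(σ⊗Δ⊗Δ)·C_{12}·C_{13}]) ≤ 2μ; (ii) Re(Tr[(Δ⊗Δ⊗Δ)·C_{12}·C_{13}]) ≤ √(d/γ)·μ^{3/2}; (iii) Re(Tr[(ρ⊗ρ)·C²]) ≤ 2d² + (2d/γ)·μ, where C is the C-observable on Fin d × Fin d; and (iv) Re(Tr[(ρ⊗ρ⊗ρ)·C_{12}·C_{13}]) ≤ 1 + 4μ + √(d/γ)·μ^{3/2}. -/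
open scoped BigOperators ComplexOrder

noncomputable section

/-- The observable `C` on `ℂ^d ⊗ ℂ^d`. -/
def Cobs {d : ℕ} (q : Fin d → ℝ) : Matrix (Fin d × Fin d) (Fin d × Fin d) ℂ :=
  fun x y => if x.1 = y.2 ∧ x.2 = y.1 then ((2 / (q x.1 + q x.2) : ℝ) : ℂ) else 0

/-- The observable `C` applied to the `s`-th and `t`-th tensor factors. -/
def Cst {d T : ℕ} (q : Fin d → ℝ) (s t : Fin T) :
    Matrix (Fin T → Fin d) (Fin T → Fin d) ℂ :=
  fun a b =>
    if b s = a t ∧ b t = a s ∧ ∀ r, r ≠ s → r ≠ t → a r = b r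
    then ((2 / (q (a s) + q (a t)) : ℝ) : ℂ) else 0

/-- Tensor product of two `d × d` matrices, on `Fin d × Fin d`. -/
def tensor2 {d : ℕ} (R S : Matrix (Fin d) (Fin d) ℂ) :
    Matrix (Fin d × Fin d) (Fin d × Fin d) ℂ :=
  fun x y => R x.1 y.1 * S x.2 y.2

/-- Tensor product of three `d × d` matrices, on `Fin 3 → Fin d`. -/
def tensor3 {d : ℕ} (R S U : Matrix (Fin d) (Fin d) ℂ) :
    Matrix (Fin 3 → Fin d) (Fin 3 → Fin d) ℂ :=
  fun a b => R (a 0) (b 0) * S (a 1) (b 1) * U (a 2) (b 2)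

/-!
With `c x y = 2 / (q x + q y)`, the trace of `R ⊗ S ⊗ U` against `C₁₂C₁₃` is the cyclic sum
`∑ c x y · c y z · R z x · S x y · U y z`, and that of `R ⊗ S` against `C²` is
`∑ (c x y)² · R x x · S y y`. Because `c x x · q x = 1`, every factor `σ` collapses the cyclic
sum: expanding `ρ = σ + Δ`, the terms with two or three factors `σ` give `∑ q = 1` and multiples
of `tr Δ = 0`, the terms `ΔσΔ` and `ΔΔσ` each give `μ = ∑ c x y |Δ x y|²`, and what remains is
`σΔΔ + ΔΔΔ`. For `σΔΔ` use `c x y · q x ≤ 2`. For `ΔΔΔ`, Cauchy–Schwarz over triples bounds the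
square of the cyclic sum by `μ²` (the sum of squares of `∑_x c x y |Δ x y|²`) times `(d / γ) μ`
(from `c x y · c y z ≤ c x z / γ`). For `ρ ⊗ ρ`, `(c a b)² ≤ 1 / (q a q b)` and AM-GM in the
ratios `ρ a a / q a` leave `2` plus the diagonal part of `μ`, scaled by `1 / γ`.
-/

open Matrix

lemma two_div_add_self_mul {K : Type*} [Field K] [NeZero (2 : K)] {a : K} (ha : a ≠ 0) :
    2 / (a + a) * a = 1 := by
  rw [← two_mul, div_mul_eq_mul_div, div_eq_one_iff_eq (mul_ne_zero two_ne_zero ha)]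

lemma two_div_add_mul_two_div_add_le {γ a b c : ℝ} (hγ : 0 < γ) (ha : γ ≤ a) (hb : γ ≤ b)
    (hc : γ ≤ c) : 2 / (a + b) * (2 / (b + c)) ≤ 1 / γ * (2 / (a + c)) := by
  have := hγ.trans_le ha; have := hγ.trans_le hb; have := hγ.trans_le hc
  rw [div_mul_div_comm, div_mul_div_comm, div_le_div_iff₀ (by positivity) (by positivity)]
  -- `(a + b)(b + c) - 2γ(a + c) ≥ (a - γ)(c - γ) ≥ 0`
  nlinarith [mul_nonneg (sub_nonneg.2 ha) (sub_nonneg.2 hc), mul_nonneg (sub_nonneg.2 hb)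
    (add_nonneg (sub_nonneg.2 ha) (sub_nonneg.2 hc))]

lemma sq_two_div_add_mul_le {a b u v : ℝ} (ha : 0 < a) (hb : 0 < b) (hu : 0 ≤ u)
    (hv : 0 ≤ v) : (2 / (a + b)) ^ 2 * (u * v) ≤ 2 + (u - a) ^ 2 / a ^ 2 + (v - b) ^ 2 / b ^ 2 := by
  have hAMGM : (2 / (a + b)) ^ 2 ≤ 1 / (a * b) := by
    rw [div_pow, div_le_div_iff₀ (by positivity) (by positivity)]
    nlinarith [sq_nonneg (a - b)]
  calc (2 / (a + b)) ^ 2 * (u * v) ≤ 1 / (a * b) * (u * v) :=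
        mul_le_mul_of_nonneg_right hAMGM (mul_nonneg hu hv)
    _ = u / a * (v / b) := by field_simp
    _ ≤ 2 + (u / a - 1) ^ 2 + (v / b - 1) ^ 2 := by
        nlinarith [sq_nonneg (u / a - v / b), sq_nonneg (u / a - 2), sq_nonneg (v / b - 2)]
    _ = 2 + (u - a) ^ 2 / a ^ 2 + (v - b) ^ 2 / b ^ 2 := by
        rw [div_sub_one ha.ne', div_sub_one hb.ne', div_pow, div_pow]

lemma two_div_add_pos {ι : Type*} {γ : ℝ} {q : ι → ℝ} (hγ : 0 < γ) (hq : ∀ i, γ ≤ q i)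
    (x y : ι) : 0 < 2 / (q x + q y) :=
  div_pos two_pos (add_pos (hγ.trans_le (hq x)) (hγ.trans_le (hq y)))

section WeightedSums

variable {ι : Type*} [Fintype ι] {γ : ℝ} {q : ι → ℝ}

lemma sum_weighted_path_sq_le (hγ : 0 < γ) (hq : ∀ i, γ ≤ q i) {r : ι → ι → ℝ}
    (hr_symm : ∀ i j, r j i = r i j) :
    ∑ x, ∑ y, ∑ z, 2 / (q x + q y) * (2 / (q y + q z)) * (r x y ^ 2 * r y z ^ 2) ≤
      (∑ x, ∑ y, 2 / (q x + q y) * r x y ^ 2) ^ 2 := by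
  set A : ι → ℝ := fun y => ∑ x, 2 / (q x + q y) * r x y ^ 2
  calc _ = ∑ y, A y ^ 2 := by
        rw [Finset.sum_comm]
        refine Finset.sum_congr rfl fun y _ => ?_
        simp only [A, sq (Finset.sum _ _), Finset.sum_mul_sum]
        refine Finset.sum_congr rfl fun x _ => Finset.sum_congr rfl fun z _ => ?_
        rw [add_comm (q y), hr_symm y z]
        ring
    _ ≤ (∑ y, A y) ^ 2 := Finset.sum_sq_le_sq_sum_of_nonneg fun y _ =>
        Finset.sum_nonneg fun x _ => by have := two_div_add_pos hγ hq x y; positivity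
    _ = _ := by rw [Finset.sum_comm]

lemma sum_weighted_chord_sq_le (hγ : 0 < γ) (hq : ∀ i, γ ≤ q i) {r : ι → ι → ℝ}
    (hr_symm : ∀ i j, r j i = r i j) :
    ∑ x, ∑ y, ∑ z, 2 / (q x + q y) * (2 / (q y + q z)) * r z x ^ 2 ≤
      Fintype.card ι / γ * ∑ x, ∑ y, 2 / (q x + q y) * r x y ^ 2 := by
  calc _ ≤ ∑ x, ∑ y, ∑ z, 1 / γ * (2 / (q x + q z) * r x z ^ 2) := by
        refine Finset.sum_le_sum fun x _ => Finset.sum_le_sum fun y _ =>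
          Finset.sum_le_sum fun z _ => ?_
        rw [hr_symm, ← mul_assoc]
        exact mul_le_mul_of_nonneg_right (two_div_add_mul_two_div_add_le hγ (hq x) (hq y) (hq z))
          (sq_nonneg _)
    _ = _ := by
        simp only [Finset.sum_const, Finset.card_univ, nsmul_eq_mul, Finset.mul_sum]
        exact Finset.sum_congr rfl fun x _ => Finset.sum_congr rfl fun z _ => by ring

lemma sum_weighted_cycle_le (hγ : 0 < γ) (hq : ∀ i, γ ≤ q i) {r : ι → ι → ℝ}
    (hr_symm : ∀ i j, r j i = r i j) :
    ∑ x, ∑ y, ∑ z, 2 / (q x + q y) * (2 / (q y + q z)) * (r z x * r x y * r y z) ≤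
      √(Fintype.card ι / γ) * (∑ x, ∑ y, 2 / (q x + q y) * r x y ^ 2) ^ ((3 : ℝ) / 2) := by
  have hc := two_div_add_pos hγ hq
  set K := ∑ x, ∑ y, 2 / (q x + q y) * r x y ^ 2
  have hK : 0 ≤ K := Finset.sum_nonneg fun x _ => Finset.sum_nonneg fun y _ => by
    have := hc x y; positivity
  have hCS := Finset.sum_sq_le_sum_mul_sum_of_sq_le_mul Finset.univ
    (r := fun p : ι × ι × ι => 2 / (q p.1 + q p.2.1) * (2 / (q p.2.1 + q p.2.2)) *
      (r p.2.2 p.1 * r p.1 p.2.1 * r p.2.1 p.2.2))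
    (f := fun p => 2 / (q p.1 + q p.2.1) * (2 / (q p.2.1 + q p.2.2)) *
      (r p.1 p.2.1 ^ 2 * r p.2.1 p.2.2 ^ 2))
    (g := fun p => 2 / (q p.1 + q p.2.1) * (2 / (q p.2.1 + q p.2.2)) * r p.2.2 p.1 ^ 2)
    (fun p _ => by have := hc p.1 p.2.1; have := hc p.2.1 p.2.2; positivity)
    (fun p _ => by have := hc p.1 p.2.1; have := hc p.2.1 p.2.2; positivity)
    (fun p _ => le_of_eq (by ring))
  simp only [Fintype.sum_prod_type] at hCS
  have hsq : (∑ x, ∑ y, ∑ z, 2 / (q x + q y) * (2 / (q y + q z)) * (r z x * r x y * r y z)) ^ 2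
      ≤ Fintype.card ι / γ * K ^ 3 :=
    calc _ ≤ _ := hCS
      _ ≤ K ^ 2 * (Fintype.card ι / γ * K) :=
          mul_le_mul (sum_weighted_path_sq_le hγ hq hr_symm)
            (sum_weighted_chord_sq_le hγ hq hr_symm)
            (Finset.sum_nonneg fun x _ => Finset.sum_nonneg fun y _ =>
              Finset.sum_nonneg fun z _ => by have := hc x y; have := hc y z; positivity)
            (sq_nonneg K)
      _ = Fintype.card ι / γ * K ^ 3 := by ring
  calc _ ≤ √(Fintype.card ι / γ * K ^ 3) := (le_abs_self _).trans (Real.abs_le_sqrt hsq)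
    _ = √(Fintype.card ι / γ) * K ^ ((3 : ℝ) / 2) := by
        rw [Real.sqrt_mul (by positivity), Real.sqrt_eq_rpow (K ^ 3), ← Real.rpow_natCast K 3,
          ← Real.rpow_mul hK]
        norm_num

lemma sum_sum_sq_two_div_add_mul_le (hγ : 0 < γ) (hq : ∀ i, γ ≤ q i) {p : ι → ℝ}
    (hp : ∀ a, 0 ≤ p a) :
    ∑ a, ∑ b, (2 / (q a + q b)) ^ 2 * (p a * p b) ≤
      2 * (Fintype.card ι : ℝ) ^ 2 + 2 * Fintype.card ι / γ * ∑ a, (p a - q a) ^ 2 / q a := by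
  have hq0 : ∀ a, 0 < q a := fun a => hγ.trans_le (hq a)
  have hdiag : ∀ a, (p a - q a) ^ 2 / q a ^ 2 ≤ 1 / γ * ((p a - q a) ^ 2 / q a) := by
    intro a
    rw [one_div_mul_eq_div, div_div, sq (q a)]
    exact div_le_div_of_nonneg_left (sq_nonneg _) (mul_pos (hq0 a) hγ)
      (mul_le_mul_of_nonneg_left (hq a) (hq0 a).le)
  set n : ℝ := (Fintype.card ι : ℝ)
  calc _ ≤ ∑ a, ∑ b, (2 + (p a - q a) ^ 2 / q a ^ 2 + (p b - q b) ^ 2 / q b ^ 2) :=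
        Finset.sum_le_sum fun a _ => Finset.sum_le_sum fun b _ =>
          sq_two_div_add_mul_le (hq0 a) (hq0 b) (hp a) (hp b)
    _ = 2 * n ^ 2 + 2 * n * ∑ a, (p a - q a) ^ 2 / q a ^ 2 := by
        simp only [Finset.sum_add_distrib, Finset.sum_const, Finset.card_univ, nsmul_eq_mul,
          ← Finset.mul_sum, n]
        ring
    _ ≤ 2 * n ^ 2 + 2 * n * (1 / γ * ∑ a, (p a - q a) ^ 2 / q a) := by
        gcongr 2 * n ^ 2 + 2 * n * ?_
        rw [Finset.mul_sum]
        exact Finset.sum_le_sum fun a _ => hdiag a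
    _ = _ := by ring

end WeightedSums

lemma sum_fin_three_arrow {α M : Type*} [Fintype α] [AddCommMonoid M] (F : α → α → α → M) :
    ∑ b : Fin 3 → α, F (b 0) (b 1) (b 2) = ∑ x, ∑ y, ∑ z, F x y z := by
  rw [← (Fin.consEquiv fun _ => α).sum_comp, Fintype.sum_prod_type]
  refine Finset.sum_congr rfl fun x _ => ?_
  rw [← (finTwoArrowEquiv α).symm.sum_comp, Fintype.sum_prod_type]
  rfl

lemma Matrix.IsHermitian.apply_mul_apply_eq_norm_sq {n : Type*} {A : Matrix n n ℂ}
    (hA : A.IsHermitian) (x y : n) : A x y * A y x = ((‖A x y‖ ^ 2 : ℝ) : ℂ) := by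
  rw [← hA.apply y x, Complex.ofReal_pow]
  exact Complex.mul_conj' _

lemma Matrix.IsHermitian.norm_apply_comm {n : Type*} {A : Matrix n n ℂ} (hA : A.IsHermitian)
    (x y : n) : ‖A y x‖ = ‖A x y‖ := by
  rw [← hA.apply x y, norm_star]

section

variable {d : ℕ}

lemma DBchi_eq_sum_norm_sub_diagonal_sq {q : Fin d → ℝ} (hq : ∀ i, q i ≠ 0)
    (hq1 : ∑ i, q i = 1) {ρ : Matrix (Fin d) (Fin d) ℂ} (htr : ρ.trace = 1) :
    DBchi q ρ = ∑ i, ∑ j, 2 / (q i + q j) * ‖(ρ - diagonal fun k => (q k : ℂ)) i j‖ ^ 2 := by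
  have hterm : ∀ i j, 2 / (q i + q j) * ‖(ρ - diagonal fun k => (q k : ℂ)) i j‖ ^ 2 =
      2 / (q i + q j) * ‖ρ i j‖ ^ 2 - if i = j then 2 * (ρ i i).re - q i else 0 := by
    intro i j
    rcases eq_or_ne i j with rfl | hij
    · have e : 2 / (q i + q i) * q i = 1 := two_div_add_self_mul (hq i)
      simp only [Matrix.sub_apply, diagonal_apply_eq, if_true, ← Complex.normSq_eq_norm_sq,
        Complex.normSq_sub, Complex.normSq_ofReal, Complex.conj_ofReal, Complex.re_mul_ofReal]
      linear_combination (q i - 2 * (ρ i i).re) * e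
    · simp [hij]
  have hre : ∑ i, (ρ i i).re = 1 := by
    simpa [trace, Complex.re_sum] using congrArg Complex.re htr
  simp only [DBchi, hterm, Finset.sum_sub_distrib, Finset.sum_ite_eq, Finset.mem_univ, if_true,
    ← Finset.mul_sum, hre, hq1]
  ring

lemma Cst_apply {T : ℕ} (q : Fin d → ℝ) (s t : Fin T) (a b : Fin T → Fin d) :
    Cst q s t a b = if b = a ∘ Equiv.swap s t then ((2 / (q (a s) + q (a t)) : ℝ) : ℂ) else 0 := by
  unfold Cst
  congr 1
  simp only [funext_iff, Function.comp_apply, Equiv.swap_apply_def]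
  grind

lemma Cst_mul_Cst_apply (q : Fin d → ℝ) (a b : Fin 3 → Fin d) :
    (Cst q 0 1 * Cst q 0 2 : Matrix (Fin 3 → Fin d) (Fin 3 → Fin d) ℂ) a b =
      if b = ![a 2, a 0, a 1]
      then ((2 / (q (a 0) + q (a 1)) * (2 / (q (a 1) + q (a 2))) : ℝ) : ℂ) else 0 := by
  have hperm : (a ∘ Equiv.swap 0 1) ∘ Equiv.swap 0 2 = ![a 2, a 0, a 1] := by
    funext r; fin_cases r <;> rfl
  have hswap : Equiv.swap (0 : Fin 3) 1 2 = 2 := rfl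
  simp only [mul_apply, Cst_apply q 0 1, ite_mul, zero_mul,
    Finset.sum_ite_eq', Finset.mem_univ, if_true, Cst_apply q 0 2,
    Function.comp_apply, Equiv.swap_apply_left, hswap, hperm]
  push_cast
  rw [mul_ite, mul_zero]

lemma trace_tensor3_mul_Cst (q : Fin d → ℝ) (R S U : Matrix (Fin d) (Fin d) ℂ) :
    (tensor3 R S U * (Cst q 0 1 * Cst q 0 2)).trace =
      ∑ x, ∑ y, ∑ z, ((2 / (q x + q y) * (2 / (q y + q z)) : ℝ) : ℂ) *
        (R z x * S x y * U y z) := by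
  rw [trace_mul_comm]
  simp only [trace, diag, mul_apply (M := Cst q 0 1 * Cst q 0 2), Cst_mul_Cst_apply, ite_mul, zero_mul,
    Finset.sum_ite_eq', Finset.mem_univ, if_true]
  rw [← sum_fin_three_arrow]
  simp [tensor3]

lemma Cobs_apply (q : Fin d → ℝ) (x y : Fin d × Fin d) :
    Cobs q x y = if y = x.swap then ((2 / (q x.1 + q x.2) : ℝ) : ℂ) else 0 := by
  unfold Cobs
  congr 1
  simp [Prod.ext_iff, eq_comm, and_comm]

lemma Cobs_mul_Cobs_apply (q : Fin d → ℝ) (x y : Fin d × Fin d) :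
    (Cobs q * Cobs q) x y = if y = x then (((2 / (q x.1 + q x.2)) ^ 2 : ℝ) : ℂ) else 0 := by
  simp only [mul_apply, Cobs_apply, ite_mul, zero_mul, Finset.sum_ite_eq', Finset.mem_univ,
    if_true, Prod.swap_swap, Prod.fst_swap, Prod.snd_swap]
  simp [add_comm (q x.2), sq]

lemma trace_tensor2_mul_Cobs_sq (q : Fin d → ℝ) (R S : Matrix (Fin d) (Fin d) ℂ) :
    (tensor2 R S * (Cobs q * Cobs q)).trace =
      ∑ x, ∑ y, (((2 / (q x + q y)) ^ 2 : ℝ) : ℂ) * (R x x * S y y) := by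
  rw [trace_mul_comm]
  simp only [trace, diag, mul_apply (M := Cobs q * Cobs q), Cobs_mul_Cobs_apply, ite_mul,
    zero_mul, Finset.sum_ite_eq', Finset.mem_univ, if_true]
  rw [Fintype.sum_prod_type]
  rfl

lemma tensor3_add_left (R R' S U : Matrix (Fin d) (Fin d) ℂ) :
    tensor3 (R + R') S U = tensor3 R S U + tensor3 R' S U := by
  ext a b; simp only [tensor3, Matrix.add_apply]; ring

lemma tensor3_add_middle (R S S' U : Matrix (Fin d) (Fin d) ℂ) :
    tensor3 R (S + S') U = tensor3 R S U + tensor3 R S' U := by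
  ext a b; simp only [tensor3, Matrix.add_apply]; ring

lemma tensor3_add_right (R S U U' : Matrix (Fin d) (Fin d) ℂ) :
    tensor3 R S (U + U') = tensor3 R S U + tensor3 R S U' := by
  ext a b; simp only [tensor3, Matrix.add_apply]; ring

lemma trace_tensor3_diagonal_add_mul_Cst (q : Fin d → ℝ) (hq : ∀ i, q i ≠ 0)
    (A : Matrix (Fin d) (Fin d) ℂ) :
    (tensor3 (diagonal (fun i => (q i : ℂ)) + A) (diagonal (fun i => (q i : ℂ)) + A)
        (diagonal (fun i => (q i : ℂ)) + A) * (Cst q 0 1 * Cst q 0 2)).trace =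
      (∑ i, (q i : ℂ)) + 3 * A.trace +
        2 * ∑ x, ∑ y, ((2 / (q x + q y) : ℝ) : ℂ) * (A x y * A y x) +
        (tensor3 (diagonal (fun i => (q i : ℂ))) A A * (Cst q 0 1 * Cst q 0 2)).trace +
        (tensor3 A A A * (Cst q 0 1 * Cst q 0 2)).trace := by
  set σ : Matrix (Fin d) (Fin d) ℂ := diagonal (fun i => (q i : ℂ))
  have e : ∀ i, 2 / ((q i : ℂ) + q i) * q i = 1 :=
    fun i => two_div_add_self_mul (Complex.ofReal_ne_zero.2 (hq i))
  have hσσσ : (tensor3 σ σ σ * (Cst q 0 1 * Cst q 0 2)).trace = ∑ i, (q i : ℂ) := by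
    rw [trace_tensor3_mul_Cst]
    simp [σ, diagonal_apply]
    exact Finset.sum_congr rfl fun x _ => by
      linear_combination (2 / ((q x : ℂ) + q x) * q x + 1) * q x * e x
  have htrace : (tensor3 A σ σ * (Cst q 0 1 * Cst q 0 2)).trace = A.trace ∧
      (tensor3 σ A σ * (Cst q 0 1 * Cst q 0 2)).trace = A.trace ∧
      (tensor3 σ σ A * (Cst q 0 1 * Cst q 0 2)).trace = A.trace := by
    refine ⟨?_, ?_, ?_⟩ <;>
    · rw [trace_tensor3_mul_Cst]
      simp [σ, diagonal_apply, trace]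
      exact Finset.sum_congr rfl fun x _ => by
        linear_combination (2 / ((q x : ℂ) + q x) * q x + 1) * A x x * e x
  have hAσA : (tensor3 A σ A * (Cst q 0 1 * Cst q 0 2)).trace =
      ∑ x, ∑ y, ((2 / (q x + q y) : ℝ) : ℂ) * (A x y * A y x) := by
    rw [trace_tensor3_mul_Cst]
    simp [σ, diagonal_apply]
    exact Finset.sum_congr rfl fun x _ => Finset.sum_congr rfl fun y _ => by
      linear_combination 2 / ((q x : ℂ) + q y) * (A y x * A x y) * e x
  have hAAσ : (tensor3 A A σ * (Cst q 0 1 * Cst q 0 2)).trace =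
      ∑ x, ∑ y, ((2 / (q x + q y) : ℝ) : ℂ) * (A x y * A y x) := by
    rw [trace_tensor3_mul_Cst]
    simp [σ, diagonal_apply]
    exact Finset.sum_congr rfl fun x _ => Finset.sum_congr rfl fun y _ => by
      linear_combination 2 / ((q x : ℂ) + q y) * (A y x * A x y) * e y
  simp only [tensor3_add_left, tensor3_add_middle, tensor3_add_right, Matrix.add_mul, trace_add,
    hσσσ, htrace.1, htrace.2.1, htrace.2.2, hAσA, hAAσ]
  ring

lemma re_trace_tensor3_diagonal_add_mul_Cst {q : Fin d → ℝ} (hq : ∀ i, q i ≠ 0)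
    (hq1 : ∑ i, q i = 1) {A : Matrix (Fin d) (Fin d) ℂ} (hA : A.IsHermitian)
    (htr : A.trace = 0) :
    (tensor3 (diagonal (fun i => (q i : ℂ)) + A) (diagonal (fun i => (q i : ℂ)) + A)
        (diagonal (fun i => (q i : ℂ)) + A) * (Cst q 0 1 * Cst q 0 2)).trace.re =
      1 + 2 * ∑ x, ∑ y, 2 / (q x + q y) * ‖A x y‖ ^ 2 +
        (tensor3 (diagonal (fun i => (q i : ℂ))) A A * (Cst q 0 1 * Cst q 0 2)).trace.re +
        (tensor3 A A A * (Cst q 0 1 * Cst q 0 2)).trace.re := by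
  have hcross : ∑ x, ∑ y, ((2 / (q x + q y) : ℝ) : ℂ) * (A x y * A y x) =
      ((∑ x, ∑ y, 2 / (q x + q y) * ‖A x y‖ ^ 2 : ℝ) : ℂ) := by
    simp only [hA.apply_mul_apply_eq_norm_sq]
    push_cast
    rfl
  rw [trace_tensor3_diagonal_add_mul_Cst q hq, hcross, htr, ← Complex.ofReal_sum, hq1]
  simp only [Complex.add_re, Complex.mul_re, Complex.ofReal_re, Complex.ofReal_im,
    Complex.re_ofNat, Complex.im_ofNat, Complex.zero_re, Complex.zero_im]
  ring

lemma re_trace_tensor3_diagonal_self_mul_Cst_le {q : Fin d → ℝ} (hq : ∀ i, 0 < q i)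
    {A : Matrix (Fin d) (Fin d) ℂ} (hA : A.IsHermitian) :
    (tensor3 (diagonal fun i => (q i : ℂ)) A A * (Cst q 0 1 * Cst q 0 2)).trace.re ≤
      2 * ∑ x, ∑ y, 2 / (q x + q y) * ‖A x y‖ ^ 2 := by
  have htrace : (tensor3 (diagonal fun i => (q i : ℂ)) A A * (Cst q 0 1 * Cst q 0 2)).trace =
      ((∑ x, ∑ y, 2 / (q x + q y) * (2 / (q y + q x) * q x) * ‖A x y‖ ^ 2 : ℝ) : ℂ) := by
    rw [trace_tensor3_mul_Cst]
    simp only [diagonal_apply, ite_mul, mul_ite, zero_mul, mul_zero, Finset.sum_ite_eq',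
      Finset.mem_univ, if_true]
    push_cast
    refine Finset.sum_congr rfl fun x _ => Finset.sum_congr rfl fun y _ => ?_
    rw [mul_assoc _ (A x y), hA.apply_mul_apply_eq_norm_sq]
    push_cast
    ring
  rw [htrace, Complex.ofReal_re, Finset.mul_sum]
  refine Finset.sum_le_sum fun x _ => ?_
  rw [Finset.mul_sum]
  refine Finset.sum_le_sum fun y _ => ?_
  have hqx := hq x; have hqy := hq y
  have hweight : 2 / (q y + q x) * q x ≤ 2 := by
    rw [div_mul_eq_mul_div, div_le_iff₀ (by positivity)]
    linarith
  have := mul_le_mul_of_nonneg_left hweight (by positivity : 0 ≤ 2 / (q x + q y))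
  nlinarith [sq_nonneg ‖A x y‖]

lemma re_trace_tensor3_self_mul_Cst_le {γ : ℝ} (hγ : 0 < γ) {q : Fin d → ℝ}
    (hq : ∀ i, γ ≤ q i) {A : Matrix (Fin d) (Fin d) ℂ} (hA : A.IsHermitian) :
    (tensor3 A A A * (Cst q 0 1 * Cst q 0 2)).trace.re ≤
      √(d / γ) * (∑ x, ∑ y, 2 / (q x + q y) * ‖A x y‖ ^ 2) ^ ((3 : ℝ) / 2) := by
  have hc : ∀ x y z, 0 ≤ 2 / (q x + q y) * (2 / (q y + q z)) := fun x y z =>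
    (mul_pos (two_div_add_pos hγ hq x y) (two_div_add_pos hγ hq y z)).le
  rw [trace_tensor3_mul_Cst]
  calc _ ≤ ‖∑ x, ∑ y, ∑ z, ((2 / (q x + q y) * (2 / (q y + q z)) : ℝ) : ℂ) *
        (A z x * A x y * A y z)‖ := Complex.re_le_norm _
    _ ≤ ∑ x, ∑ y, ∑ z, 2 / (q x + q y) * (2 / (q y + q z)) *
        (‖A z x‖ * ‖A x y‖ * ‖A y z‖) := by
      refine (norm_sum_le _ _).trans (Finset.sum_le_sum fun x _ => (norm_sum_le _ _).trans
        (Finset.sum_le_sum fun y _ => (norm_sum_le _ _).trans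
          (Finset.sum_le_sum fun z _ => le_of_eq ?_)))
      rw [norm_mul, norm_mul, norm_mul, Complex.norm_real, Real.norm_of_nonneg (hc x y z)]
    _ ≤ _ := by
      simpa using sum_weighted_cycle_le hγ hq (r := fun x y => ‖A x y‖) hA.norm_apply_comm

lemma re_trace_tensor2_mul_Cobs_sq_le {γ : ℝ} (hγ : 0 < γ) {q : Fin d → ℝ}
    (hq : ∀ i, γ ≤ q i) {ρ : Matrix (Fin d) (Fin d) ℂ} (hρ : ρ.PosSemidef) :
    (tensor2 ρ ρ * (Cobs q * Cobs q)).trace.re ≤ 2 * (d : ℝ) ^ 2 + 2 * d / γ *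
      ∑ i, ∑ j, 2 / (q i + q j) * ‖(ρ - diagonal fun k => (q k : ℂ)) i j‖ ^ 2 := by
  have hq0 : ∀ i, 0 < q i := fun i => hγ.trans_le (hq i)
  have hdiag : ∀ a, ρ a a = (ρ a a).re := fun a =>
    Complex.eq_re_of_ofReal_le (r := 0) (by rw [Complex.ofReal_zero]; exact hρ.diag_nonneg)
  have hre : (tensor2 ρ ρ * (Cobs q * Cobs q)).trace.re =
      ∑ a, ∑ b, (2 / (q a + q b)) ^ 2 * ((ρ a a).re * (ρ b b).re) := by
    rw [trace_tensor2_mul_Cobs_sq]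
    simp only [Complex.re_sum]
    refine Finset.sum_congr rfl fun a _ => Finset.sum_congr rfl fun b _ => ?_
    rw [hdiag a, hdiag b]
    norm_cast
  have hpart : ∑ a, ((ρ a a).re - q a) ^ 2 / q a ≤
      ∑ i, ∑ j, 2 / (q i + q j) * ‖(ρ - diagonal fun k => (q k : ℂ)) i j‖ ^ 2 := by
    refine Finset.sum_le_sum fun a _ => le_of_eq_of_le ?_ (Finset.single_le_sum
      (f := fun j => 2 / (q a + q j) * ‖(ρ - diagonal fun k => (q k : ℂ)) a j‖ ^ 2)
      (fun j _ => by have := two_div_add_pos hγ hq a j; positivity) (Finset.mem_univ a))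
    have : q a ≠ 0 := (hq0 a).ne'
    rw [Matrix.sub_apply, diagonal_apply_eq, hdiag a, ← Complex.ofReal_sub, Complex.norm_real,
      Real.norm_eq_abs, sq_abs, Complex.ofReal_re]
    field_simp
    ring
  rw [hre]
  refine (sum_sum_sq_two_div_add_mul_le hγ hq fun a => ?_).trans ?_
  · exact (Complex.nonneg_iff.1 hρ.diag_nonneg).1
  · simp only [Fintype.card_fin]
    gcongr

end

/-- The miscellaneous trace inequalities used in the variance bound. -/
theorem misc_trace_inequalities (d : ℕ) (γ : ℝ) (hγ : 0 < γ)
    (q : Fin d → ℝ) (hq : ∀ i, γ ≤ q i) (hq1 : (∑ i, q i) = 1)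
    (ρ : Matrix (Fin d) (Fin d) ℂ) (hρ : IsState ρ)
    (σ : Matrix (Fin d) (Fin d) ℂ) (hσ : σ = Matrix.diagonal (fun i => ((q i : ℝ) : ℂ)))
    (Δ : Matrix (Fin d) (Fin d) ℂ) (hΔ : Δ = ρ - σ)
    (μ : ℝ) (hμ : μ = DBchi q ρ) :
    ((tensor3 σ Δ Δ * (Cst q 0 1 * Cst q 0 2)).trace).re ≤ 2 * μ ∧
    ((tensor3 Δ Δ Δ * (Cst q 0 1 * Cst q 0 2)).trace).re ≤
      Real.sqrt ((d : ℝ) / γ) * μ ^ ((3 : ℝ) / 2) ∧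
    ((tensor2 ρ ρ * (Cobs q * Cobs q)).trace).re ≤
      2 * (d : ℝ) ^ 2 + (2 * (d : ℝ) / γ) * μ ∧
    ((tensor3 ρ ρ ρ * (Cst q 0 1 * Cst q 0 2)).trace).re ≤
      1 + 4 * μ + Real.sqrt ((d : ℝ) / γ) * μ ^ ((3 : ℝ) / 2) := by
  have hq0 : ∀ i, 0 < q i := fun i => hγ.trans_le (hq i)
  have hσ_herm : σ.IsHermitian := hσ ▸ isHermitian_diagonal_iff.2 fun i => Complex.conj_ofReal _
  have hΔ_herm : Δ.IsHermitian := hΔ ▸ hρ.1.1.sub hσ_herm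
  have hμΔ : μ = ∑ x, ∑ y, 2 / (q x + q y) * ‖Δ x y‖ ^ 2 := by
    rw [hμ, hΔ, hσ, DBchi_eq_sum_norm_sub_diagonal_sq (fun i => (hq0 i).ne') hq1 hρ.2]
  have hσΔΔ : ((tensor3 σ Δ Δ * (Cst q 0 1 * Cst q 0 2)).trace).re ≤ 2 * μ :=
    hσ ▸ hμΔ ▸ re_trace_tensor3_diagonal_self_mul_Cst_le hq0 hΔ_herm
  have hΔΔΔ : ((tensor3 Δ Δ Δ * (Cst q 0 1 * Cst q 0 2)).trace).re ≤
      √(d / γ) * μ ^ ((3 : ℝ) / 2) :=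
    hμΔ ▸ re_trace_tensor3_self_mul_Cst_le hγ hq hΔ_herm
  refine ⟨hσΔΔ, hΔΔΔ, ?_, ?_⟩
  · have := re_trace_tensor2_mul_Cobs_sq_le hγ hq hρ.1
    rwa [← hσ, ← hΔ, ← hμΔ] at this
  · have hρσΔ : ρ = σ + Δ := by rw [hΔ, add_sub_cancel]
    have hΔ_tr : Δ.trace = 0 := by
      rw [hΔ, trace_sub, hρ.2, hσ, trace_diagonal, ← Complex.ofReal_sum, hq1, Complex.ofReal_one,
        sub_self]
    rw [hρσΔ, hσ, re_trace_tensor3_diagonal_add_mul_Cst (fun i => (hq0 i).ne') hq1 hΔ_herm hΔ_tr,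
      ← hσ, ← hμΔ]
    linarith
end
end
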